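/- arXiv:1710.06890 — 3 statements merged into one kernel-verified Lean document; each statement's English description precedes it below -/
import Mathlib

section
/- Let l ≥ 2. Then det P = 2 and det P̃ = 2; in particular P and P̃ are invertible over any field of characteristic different from 2. -/
/-! Matrices `A`, `P`, `P̃` from the paper (1-based index conventions).

`M = binom(l,2)`, `N = binom(l+1,2) = M + l`.  Rows `1, …, M` are indexed by pairs:
row `r` lies in block `blk r` (the stack of the matrices `C₁, …, C_{l-1}`), at position
`pos r` within that block. -/

/-- `triang i = i*(i+1)/2`, the number of rows of the vertical stack `C₁, …, C_i`. -/
def triang (i : ℕ) : ℕ := i * (i + 1) / 2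

/-- For a (1-based) row index `r`, the index `i` of the block `C_i` containing row `r` of the
vertical stack `C₁, …`: the least `i` with `r ≤ triang i`. -/
def blk (r : ℕ) : ℕ :=
  Nat.find (⟨2 * r, by
    have h2 : 2 * r * (2 * r + 1) / 2 = r * (2 * r + 1) := by
      rw [mul_assoc, Nat.mul_div_cancel_left _ (by norm_num)]
    rw [triang, h2]
    exact Nat.le_mul_of_pos_right r (by positivity)⟩ : ∃ i, r ≤ triang i)

/-- The (1-based) position of row `r` inside its block `C_(blk r)`. -/
def pos (r : ℕ) : ℕ := r - triang (blk r - 1)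

/-- The `k × (l−1)` matrix `C_k` (1-based entries): `(C_k)_{h,h} = (C_k)_{h,k} = 1` for
`1 ≤ h < k`, `(C_k)_{k,k} = 2`, and `0` otherwise.  (The matrix `D` of the paper is `C_l`,
viewed as an `l × l` matrix.) -/
def Cent (k h j : ℕ) : ℤ :=
  if h = k ∧ j = k then 2 else if h < k ∧ (j = h ∨ j = k) then 1 else 0

/-- The entry of `A` in (1-based) row `i`, column `j`; blocks of sizes `(M, l-1, 1)`. -/
def Aent (l i j : ℕ) : ℤ :=
  if i ≤ Nat.choose l 2 then
    if j ≤ Nat.choose l 2 then (if i = j then 4 else 0)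
    else if j ≤ Nat.choose l 2 + (l - 1) then
      (-4) * Cent (blk i) (pos i) (j - Nat.choose l 2)
    else 2
  else if i ≤ Nat.choose l 2 + (l - 1) then
    if j ≤ Nat.choose l 2 then 4 * Cent (blk j) (pos j) (i - Nat.choose l 2)
    else if j ≤ Nat.choose l 2 + (l - 1) then (if i = j then 4 else -4)
    else -6
  else
    if j ≤ Nat.choose l 2 then 2 else 6

/-- The matrix `A`, an `N × N` integer matrix with `N = binom(l+1,2)`. -/
def Amat (l : ℕ) : Matrix (Fin (Nat.choose (l + 1) 2)) (Fin (Nat.choose (l + 1) 2)) ℤ :=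
  fun i j => Aent l (i.1 + 1) (j.1 + 1)

/-- The entry of `P` in (1-based) row `i`, column `j`; blocks of sizes `(M, l)`:
top-left `I_M`, bottom-left `0`, top-right the stack of `C₁, …, C_{l-1}` with an extra
last column of ones, bottom-right `D = C_l`. -/
def Pent (l i j : ℕ) : ℤ :=
  if i ≤ Nat.choose l 2 then
    if j ≤ Nat.choose l 2 then (if i = j then 1 else 0)
    else if j ≤ Nat.choose l 2 + (l - 1) then Cent (blk i) (pos i) (j - Nat.choose l 2)
    else 1
  else
    if j ≤ Nat.choose l 2 then 0
    else Cent l (i - Nat.choose l 2) (j - Nat.choose l 2)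

/-- The matrix `P`. -/
def Pmat (l : ℕ) : Matrix (Fin (Nat.choose (l + 1) 2)) (Fin (Nat.choose (l + 1) 2)) ℤ :=
  fun i j => Pent l (i.1 + 1) (j.1 + 1)

/-- The entry of `P̃` in (1-based) row `i`, column `j`:
`P̃_{i,i} = P_{i,i}`; `P̃_{N,j} = 1` for `j ≤ M`; and `P̃_{i,j} = −P_{j,i}` otherwise. -/
def Ptent (l i j : ℕ) : ℤ :=
  if i = j then Pent l i i
  else if i = Nat.choose (l + 1) 2 ∧ j ≤ Nat.choose l 2 then 1
  else -(Pent l j i)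

/-- The matrix `P̃`. -/
def Ptmat (l : ℕ) : Matrix (Fin (Nat.choose (l + 1) 2)) (Fin (Nat.choose (l + 1) 2)) ℤ :=
  fun i j => Ptent l (i.1 + 1) (j.1 + 1)

/-! `P` is upper triangular and `P̃` is lower triangular (above the diagonal `P̃` is `-Pᵀ`,
which vanishes there, and the extra ones of its last row lie left of the diagonal); both have
diagonal `(1, …, 1, 2)`. Hence both determinants are `2`, a unit in characteristic `≠ 2`. -/

lemma cent_eq_zero_of_lt {k h j : ℕ} (hjh : j < h) : Cent k h j = 0 := by
  unfold Cent; split_ifs <;> omega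

lemma pent_eq_zero_of_lt {l i j : ℕ} (hji : j < i) : Pent l i j = 0 := by
  unfold Pent
  split_ifs <;> first | rfl | omega | exact cent_eq_zero_of_lt (by omega)

lemma add_one_choose_two (l : ℕ) : (l + 1).choose 2 = l.choose 2 + l := by
  rw [Nat.choose_succ_succ', Nat.choose_one_right, add_comm]

lemma pent_self {l r : ℕ} (hl : 1 ≤ l) (hr : r ≤ l.choose 2 + l) :
    Pent l r r = if r = l.choose 2 + l then 2 else 1 := by
  unfold Pent Cent
  split_ifs <;> omega

lemma ptent_self (l r : ℕ) : Ptent l r r = Pent l r r := if_pos rfl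

lemma isUpperTriangular_pmat (l : ℕ) : (Pmat l).IsUpperTriangular := fun _ _ hji =>
  pent_eq_zero_of_lt (Nat.succ_lt_succ (Fin.lt_def.mp hji))

lemma isLowerTriangular_ptmat (l : ℕ) : (Ptmat l).IsLowerTriangular := by
  intro i j hij
  have hij : (i : ℕ) < j := Fin.lt_def.mp hij
  have hlast : ¬((i : ℕ) + 1 = (l + 1).choose 2 ∧ (j : ℕ) + 1 ≤ l.choose 2) := by
    have := j.isLt
    omega
  change Ptent l (i + 1) (j + 1) = 0
  rw [Ptent, if_neg (by omega), if_neg hlast, pent_eq_zero_of_lt (by omega), neg_zero]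

lemma prod_pent_self {l : ℕ} (hl : 1 ≤ l) :
    ∏ i : Fin ((l + 1).choose 2), Pent l (i + 1) (i + 1) = 2 := by
  obtain ⟨n, hn⟩ : ∃ n, (l + 1).choose 2 = n + 1 ∧ l.choose 2 + l = n + 1 :=
    ⟨l.choose 2 + l - 1, by rw [add_one_choose_two]; omega⟩
  rw [Fin.prod_univ_eq_prod_range (fun i => Pent l (i + 1) (i + 1)), hn.1,
    Finset.prod_range_succ, pent_self hl hn.2.ge, if_pos hn.2.symm,
    Finset.prod_eq_one fun i hi => ?_, one_mul]
  have hi := Finset.mem_range.mp hi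
  rw [pent_self hl (by omega), if_neg (by omega)]

lemma isUnit_map_intCast_of_det_eq_two {n : Type*} [Fintype n] [DecidableEq n]
    {Q : Matrix n n ℤ} (hQ : Q.det = 2) {K : Type*} [Field K] (hK : ringChar K ≠ 2) :
    IsUnit (Q.map (Int.cast : ℤ → K)) := by
  have hdet : (Q.map (Int.cast : ℤ → K)).det = (Q.det : K) :=
    (RingHom.map_det (Int.castRingHom K) Q).symm
  rw [Matrix.isUnit_iff_isUnit_det, hdet, hQ, Int.cast_ofNat, isUnit_iff_ne_zero]
  exact Ring.two_ne_zero hK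

/-- For `l ≥ 2`, `det P = 2` and `det P̃ = 2`; in particular, `P` and `P̃` are invertible
over any field of characteristic different from `2`. -/
theorem det_pmat_eq_two (l : ℕ) (hl : 2 ≤ l) :
    (Pmat l).det = 2 ∧ (Ptmat l).det = 2 ∧
    ∀ (K : Type*) [Field K], ringChar K ≠ 2 →
      IsUnit ((Pmat l).map (Int.cast : ℤ → K)) ∧
      IsUnit ((Ptmat l).map (Int.cast : ℤ → K)) := by
  have hdiag := prod_pent_self (l := l) (by omega)
  have hP : (Pmat l).det = 2 := by
    rw [Matrix.det_of_isUpperTriangular (isUpperTriangular_pmat l)]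
    exact hdiag
  have hPt : (Ptmat l).det = 2 := by
    rw [Matrix.det_of_isLowerTriangular _ (isLowerTriangular_ptmat l)]
    simpa only [Ptmat, ptent_self] using hdiag
  exact ⟨hP, hPt, fun K _ hK =>
    ⟨isUnit_map_intCast_of_det_eq_two hP hK, isUnit_map_intCast_of_det_eq_two hPt hK⟩⟩
end

section
/- Let l ≥ 2 and let p be an odd prime. Then the rank of the reduction of A modulo p (i.e., of the matrix over 𝔽_p obtained by applying the ring map ℤ → ℤ/pℤ to every entry of A) equals binom(l+1,2) − l·ε_p(l+3) − ε_p(l+2), where ε_p(k) = 1 if p divides k and ε_p(k) = 0 otherwise. -/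
section Part1
open Finset

lemma two_mul_triang (k : ℕ) : 2 * triang k = k * (k + 1) :=
  Nat.two_mul_div_two_of_even (Nat.even_mul_succ_self k)

lemma triang_succ (k : ℕ) : triang (k + 1) = triang k + (k + 1) := by
  have h1 := two_mul_triang k
  have h2 := two_mul_triang (k + 1)
  have h3 : (k+1) * (k+1+1) = k * (k+1) + 2*(k+1) := by ring
  omega

lemma triang_zero : triang 0 = 0 := rfl

lemma triang_mono : Monotone triang := by
  apply monotone_nat_of_le_succ
  intro n; rw [triang_succ]; omega

lemma triang_lt {i j : ℕ} (h : i < j) : triang i < triang j := by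
  calc triang i < triang (i+1) := by rw [triang_succ]; omega
  _ ≤ triang j := triang_mono h

lemma triang_choose {l : ℕ} (hl : 1 ≤ l) : triang (l - 1) = l.choose 2 := by
  have h1 := two_mul_triang (l - 1)
  have h2 : l.choose 2 = l * (l-1) / 2 := Nat.choose_two_right l
  have hl' : l - 1 + 1 = l := by omega
  have h4 : l * (l - 1) = (l - 1) * (l - 1 + 1) := by rw [hl', Nat.mul_comm]
  have h3 : 2 * (l * (l-1) / 2) = l * (l - 1) :=
    h4 ▸ Nat.two_mul_div_two_of_even (Nat.even_mul_succ_self (l-1))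
  omega

lemma blk_eq {k h : ℕ} (h1 : 1 ≤ h) (h2 : h ≤ k + 1) : blk (triang k + h) = k + 1 := by
  rw [blk, Nat.find_eq_iff]
  constructor
  · rw [triang_succ]; omega
  · intro n hn hle
    have : triang n ≤ triang k := triang_mono (by omega)
    omega

lemma pos_eq {k h : ℕ} (h1 : 1 ≤ h) (h2 : h ≤ k + 1) : pos (triang k + h) = h := by
  rw [pos, blk_eq h1 h2]; simp

lemma sum_shift {M : Type*} [AddCommMonoid M] (g : ℕ → M) (t s : ℕ) :
    ∑ r ∈ Finset.Ioc t (t + s), g r = ∑ h ∈ Finset.Icc 1 s, g (t + h) := by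
  rw [show Finset.Icc 1 s = Finset.Ioc 0 s by rw [← Finset.Icc_add_one_left_eq_Ioc, zero_add]]
  rw [show Finset.Ioc t (t + s) = (Finset.Ioc 0 s).map (addLeftEmbedding t) by
    rw [Finset.map_add_left_Ioc]; simp]
  rw [Finset.sum_map]
  rfl

lemma sum_blk_pos {M : Type*} [AddCommMonoid M] (f : ℕ → ℕ → M) (K : ℕ) :
    ∑ r ∈ Finset.Icc 1 (triang K), f (blk r) (pos r)
      = ∑ k ∈ Finset.Icc 1 K, ∑ h ∈ Finset.Icc 1 k, f k h := by
  induction K with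
  | zero => simp [triang_zero]
  | succ K ih =>
    rw [Finset.sum_Icc_succ_top (by omega : 1 ≤ K + 1)]
    rw [show Finset.Icc 1 (triang (K+1)) = Finset.Ioc 0 (triang (K+1)) by
      rw [← Finset.Icc_add_one_left_eq_Ioc, zero_add]]
    rw [← Finset.sum_Ioc_consecutive _ (Nat.zero_le (triang K))
      (by rw [triang_succ]; omega : triang K ≤ triang (K+1))]
    rw [show Finset.Ioc 0 (triang K) = Finset.Icc 1 (triang K) by rw [← Finset.Icc_add_one_left_eq_Ioc, zero_add]]
    rw [ih]
    congr 1
    rw [show triang (K + 1) = triang K + (K + 1) from triang_succ K, sum_shift]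
    apply Finset.sum_congr rfl
    intro h hh
    rw [Finset.mem_Icc] at hh
    rw [blk_eq hh.1 hh.2, pos_eq hh.1 hh.2]

end Part1
section Part2
open Finset

lemma blk_exists (r : ℕ) : ∃ i, r ≤ triang i := by
  refine ⟨2 * r, ?_⟩
  have h := two_mul_triang (2 * r)
  have h2 : 2 * r * (2 * r + 1) = 2 * (r * (2 * r + 1)) := by ring
  have h3 : r ≤ r * (2 * r + 1) := Nat.le_mul_of_pos_right r (by positivity)
  omega

lemma blk_spec (r : ℕ) : r ≤ triang (blk r) := by
  unfold blk; exact Nat.find_spec (blk_exists r)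

lemma blk_le {r K : ℕ} (h : r ≤ triang K) : blk r ≤ K := by
  unfold blk; exact Nat.find_le h

lemma blk_ge_one {r : ℕ} (h1 : 1 ≤ r) : 1 ≤ blk r := by
  have h3 := blk_spec r
  by_contra hb
  have h0 : blk r = 0 := by omega
  rw [h0, triang_zero] at h3; omega

lemma blk_min {r : ℕ} (h1 : 1 ≤ r) : triang (blk r - 1) < r := by
  have hb : 1 ≤ blk r := blk_ge_one h1
  by_contra h
  have h2 : r ≤ triang (blk r - 1) := by omega
  have := blk_le h2
  omega

lemma pos_ge_one {r : ℕ} (h1 : 1 ≤ r) : 1 ≤ pos r := by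
  have := blk_min h1; unfold pos; omega

lemma pos_le_blk {r : ℕ} (h1 : 1 ≤ r) : pos r ≤ blk r := by
  have h2 := blk_min h1
  have h3 := blk_spec r
  have hb : 1 ≤ blk r := blk_ge_one h1
  have h4 : triang (blk r) = triang (blk r - 1) + blk r := by
    have he : blk r - 1 + 1 = blk r := by omega
    calc triang (blk r) = triang (blk r - 1 + 1) := by rw [he]
    _ = triang (blk r - 1) + (blk r - 1 + 1) := triang_succ _
    _ = triang (blk r - 1) + blk r := by rw [he]
  unfold pos; omega

/-- pointwise formulas for Cent -/
lemma cent_lt {k h a : ℕ} (hh : h < k) :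
    Cent k h a = (if a = h then 1 else 0) + (if a = k then 1 else 0) := by
  unfold Cent; split_ifs <;> omega

lemma cent_self (k a : ℕ) : Cent k k a = if a = k then 2 else 0 := by
  unfold Cent; split_ifs <;> omega

lemma cent_sq {k h a : ℕ} (hh : h < k) : Cent k h a * Cent k h a = Cent k h a := by
  rw [cent_lt hh]; split_ifs <;> omega

/-- partial column sum over rows `1..k-1` -/
lemma colsum_strict (k a : ℕ) :
    ∑ h ∈ Finset.Icc 1 k, Cent (k+1) h a
      = (if 1 ≤ a ∧ a ≤ k then 1 else 0) + (k : ℤ) * (if a = k + 1 then 1 else 0) := by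
  have : ∀ h ∈ Finset.Icc 1 k, Cent (k+1) h a
      = (if a = h then (1:ℤ) else 0) + (if a = k + 1 then 1 else 0) := by
    intro h hh
    rw [Finset.mem_Icc] at hh
    exact cent_lt (by omega)
  rw [Finset.sum_congr rfl this, Finset.sum_add_distrib]
  simp only [Finset.sum_ite_eq, Finset.sum_const, Nat.card_Icc, Finset.mem_Icc,
    nsmul_eq_mul]
  split_ifs <;> push_cast <;> omega

lemma colsum {k a : ℕ} (hk : 1 ≤ k) :
    ∑ h ∈ Finset.Icc 1 k, Cent k h a
      = if a = k then (k : ℤ) + 1 else if 1 ≤ a ∧ a < k then 1 else 0 := by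
  obtain ⟨k', rfl⟩ : ∃ k', k = k' + 1 := ⟨k - 1, by omega⟩
  rw [Finset.sum_Icc_succ_top (by omega : 1 ≤ k' + 1), colsum_strict, cent_self]
  split_ifs <;> push_cast <;> omega

lemma colsum2_diag {k a : ℕ} (hk : 1 ≤ k) :
    ∑ h ∈ Finset.Icc 1 k, Cent k h a * Cent k h a
      = if a = k then (k : ℤ) + 3 else if 1 ≤ a ∧ a < k then 1 else 0 := by
  obtain ⟨k', rfl⟩ : ∃ k', k = k' + 1 := ⟨k - 1, by omega⟩
  rw [Finset.sum_Icc_succ_top (by omega : 1 ≤ k' + 1)]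
  have : ∀ h ∈ Finset.Icc 1 k', Cent (k'+1) h a * Cent (k'+1) h a = Cent (k'+1) h a := by
    intro h hh; rw [Finset.mem_Icc] at hh; exact cent_sq (by omega)
  rw [Finset.sum_congr rfl this, colsum_strict, cent_self]
  split_ifs <;> push_cast <;> omega

lemma colsum2_off {k a b : ℕ} (hk : 1 ≤ k) (hab : a ≠ b) :
    ∑ h ∈ Finset.Icc 1 k, Cent k h a * Cent k h b
      = (if a = k ∧ 1 ≤ b ∧ b < k then 1 else 0)
          + (if b = k ∧ 1 ≤ a ∧ a < k then 1 else 0) := by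
  obtain ⟨k', rfl⟩ : ∃ k', k = k' + 1 := ⟨k - 1, by omega⟩
  rw [Finset.sum_Icc_succ_top (by omega : 1 ≤ k' + 1)]
  have hpt : ∀ h ∈ Finset.Icc 1 k', Cent (k'+1) h a * Cent (k'+1) h b
      = (if a = k'+1 then (if b = h then (1:ℤ) else 0) else 0)
        + (if b = k'+1 then (if a = h then (1:ℤ) else 0) else 0) := by
    intro h hh
    rw [Finset.mem_Icc] at hh
    rw [cent_lt (by omega), cent_lt (by omega)]
    split_ifs <;> omega
  rw [Finset.sum_congr rfl hpt, Finset.sum_add_distrib, cent_self, cent_self]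
  by_cases ha : a = k' + 1 <;> by_cases hb : b = k' + 1 <;>
    simp [ha, hb, Finset.sum_ite_eq', Finset.mem_Icc] <;>
      first
      | (split_ifs <;> omega)
      | omega

end Part2
section Part3
open Finset

lemma choose_succ (l : ℕ) : (l+1).choose 2 = l.choose 2 + l := by
  rw [Nat.choose_succ_succ, Nat.choose_one_right, Nat.add_comm]

lemma two_mul_choose {l : ℕ} (hl : 1 ≤ l) : 2 * l.choose 2 = l * (l - 1) := by
  rw [← triang_choose hl]
  rw [two_mul_triang]
  have : l - 1 + 1 = l := by omega
  rw [this, Nat.mul_comm]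

lemma choose_ge_one {l : ℕ} (hl : 2 ≤ l) : 1 ≤ l.choose 2 := by
  have := two_mul_choose (by omega : 1 ≤ l)
  have h2 : 2 ≤ l * (l - 1) := by
    calc 2 = 2 * 1 := rfl
    _ ≤ l * (l-1) := Nat.mul_le_mul (by omega) (by omega)
  omega

lemma sum_lt_indicator (a K : ℕ) :
    ∑ k ∈ Finset.Icc 1 K, (if a < k then (1:ℤ) else 0) = ((K - a : ℕ) : ℤ) := by
  rw [Finset.sum_ite, Finset.sum_const, Finset.sum_const_zero, add_zero]
  have hf : (Finset.Icc 1 K).filter (fun k => a < k) = Finset.Icc (a+1) K := by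
    ext x; simp only [Finset.mem_filter, Finset.mem_Icc]; omega
  rw [hf, Nat.card_Icc]
  simp only [nsmul_eq_mul, mul_one]
  congr 1
  omega

lemma S1 {l a : ℕ} (hl : 2 ≤ l) (ha1 : 1 ≤ a) (ha2 : a ≤ l - 1) :
    ∑ r ∈ Finset.Icc 1 (l.choose 2), Cent (blk r) (pos r) a = (l : ℤ) := by
  rw [← triang_choose (by omega : 1 ≤ l), sum_blk_pos (fun k h => Cent k h a)]
  have h1 : ∀ k ∈ Finset.Icc 1 (l-1), ∑ h ∈ Finset.Icc 1 k, Cent k h a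
      = (if a = k then ((a:ℤ)+1) else 0) + (if a < k then 1 else 0) := by
    intro k hk
    rw [Finset.mem_Icc] at hk
    rw [colsum hk.1]
    split_ifs <;> omega
  rw [Finset.sum_congr rfl h1, Finset.sum_add_distrib, Finset.sum_ite_eq,
    sum_lt_indicator, if_pos (Finset.mem_Icc.mpr ⟨ha1, ha2⟩)]
  omega

lemma S2diag {l a : ℕ} (hl : 2 ≤ l) (ha1 : 1 ≤ a) (ha2 : a ≤ l - 1) :
    ∑ r ∈ Finset.Icc 1 (l.choose 2),
        Cent (blk r) (pos r) a * Cent (blk r) (pos r) a = (l : ℤ) + 2 := by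
  rw [← triang_choose (by omega : 1 ≤ l), sum_blk_pos (fun k h => Cent k h a * Cent k h a)]
  have h1 : ∀ k ∈ Finset.Icc 1 (l-1), ∑ h ∈ Finset.Icc 1 k, Cent k h a * Cent k h a
      = (if a = k then ((a:ℤ)+3) else 0) + (if a < k then 1 else 0) := by
    intro k hk
    rw [Finset.mem_Icc] at hk
    rw [colsum2_diag hk.1]
    split_ifs <;> omega
  rw [Finset.sum_congr rfl h1, Finset.sum_add_distrib, Finset.sum_ite_eq,
    sum_lt_indicator, if_pos (Finset.mem_Icc.mpr ⟨ha1, ha2⟩)]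
  omega

lemma S2off {l a b : ℕ} (hl : 2 ≤ l) (ha1 : 1 ≤ a) (ha2 : a ≤ l - 1)
    (hb1 : 1 ≤ b) (hb2 : b ≤ l - 1) (hab : a ≠ b) :
    ∑ r ∈ Finset.Icc 1 (l.choose 2),
        Cent (blk r) (pos r) a * Cent (blk r) (pos r) b = 1 := by
  rw [← triang_choose (by omega : 1 ≤ l), sum_blk_pos (fun k h => Cent k h a * Cent k h b)]
  have h1 : ∀ k ∈ Finset.Icc 1 (l-1), ∑ h ∈ Finset.Icc 1 k, Cent k h a * Cent k h b
      = (if a = k then (if 1 ≤ b ∧ b < a then (1:ℤ) else 0) else 0)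
        + (if b = k then (if 1 ≤ a ∧ a < b then (1:ℤ) else 0) else 0) := by
    intro k hk
    rw [Finset.mem_Icc] at hk
    rw [colsum2_off hk.1 hab]
    split_ifs <;> omega
  rw [Finset.sum_congr rfl h1, Finset.sum_add_distrib, Finset.sum_ite_eq,
    Finset.sum_ite_eq, if_pos (Finset.mem_Icc.mpr ⟨ha1, ha2⟩),
    if_pos (Finset.mem_Icc.mpr ⟨hb1, hb2⟩)]
  split_ifs <;> omega

lemma rowsum {l q k : ℕ} (hq1 : 1 ≤ q) (hqk : q ≤ k) (hk1 : 1 ≤ k) (hk : k ≤ l - 1) :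
    ∑ j ∈ Finset.Icc 1 (l-1), Cent k q j = 2 := by
  by_cases hq : q = k
  · subst hq
    have h1 : ∀ j ∈ Finset.Icc 1 (l-1), Cent q q j = if j = q then 2 else 0 := by
      intro j _; exact cent_self q j
    rw [Finset.sum_congr rfl h1, Finset.sum_ite_eq', if_pos (Finset.mem_Icc.mpr ⟨hq1, hk⟩)]
  · have h1 : ∀ j ∈ Finset.Icc 1 (l-1), Cent k q j
        = (if j = q then (1:ℤ) else 0) + (if j = k then 1 else 0) := by
      intro j _; exact cent_lt (by omega)
    rw [Finset.sum_congr rfl h1, Finset.sum_add_distrib, Finset.sum_ite_eq',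
      Finset.sum_ite_eq', if_pos (Finset.mem_Icc.mpr ⟨hq1, by omega⟩),
      if_pos (Finset.mem_Icc.mpr ⟨hk1, hk⟩)]
    norm_num

/-- blk/pos bounds for `r ≤ choose l 2` -/
lemma blk_le_of_le {l r : ℕ} (hl : 2 ≤ l) (hr : r ≤ l.choose 2) : blk r ≤ l - 1 := by
  apply blk_le
  rwa [triang_choose (by omega : 1 ≤ l)]

end Part3
section Part4
open Finset

variable {l i j r : ℕ}

/-! Aent region lemmas -/
lemma A11 (hi : i ≤ l.choose 2) (hj : j ≤ l.choose 2) :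
    Aent l i j = if i = j then 4 else 0 := by
  unfold Aent; rw [if_pos hi, if_pos hj]

lemma A12 (hl : 2 ≤ l) (hi : i ≤ l.choose 2) (hj1 : l.choose 2 < j) (hj2 : j ≤ l.choose 2 + (l-1)) :
    Aent l i j = -4 * Cent (blk i) (pos i) (j - l.choose 2) := by
  unfold Aent; rw [if_pos hi, if_neg (by omega), if_pos hj2]

lemma A13 (hl : 2 ≤ l) (hi : i ≤ l.choose 2) :
    Aent l i (l.choose 2 + l) = 2 := by
  unfold Aent; rw [if_pos hi, if_neg (by omega), if_neg (by omega)]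

lemma A21 (hi1 : l.choose 2 < i) (hi2 : i ≤ l.choose 2 + (l-1)) (hj : j ≤ l.choose 2) :
    Aent l i j = 4 * Cent (blk j) (pos j) (i - l.choose 2) := by
  unfold Aent; rw [if_neg (by omega), if_pos hi2, if_pos hj]

lemma A22 (hi1 : l.choose 2 < i) (hi2 : i ≤ l.choose 2 + (l-1))
    (hj1 : l.choose 2 < j) (hj2 : j ≤ l.choose 2 + (l-1)) :
    Aent l i j = if i = j then 4 else -4 := by
  unfold Aent; rw [if_neg (by omega), if_pos hi2, if_neg (by omega), if_pos hj2]

lemma A23 (hl : 2 ≤ l) (hi1 : l.choose 2 < i) (hi2 : i ≤ l.choose 2 + (l-1)) :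
    Aent l i (l.choose 2 + l) = -6 := by
  unfold Aent; rw [if_neg (by omega), if_pos hi2, if_neg (by omega), if_neg (by omega)]

lemma A31 (hl : 2 ≤ l) (hj : j ≤ l.choose 2) :
    Aent l (l.choose 2 + l) j = 2 := by
  unfold Aent; rw [if_neg (by omega), if_neg (by omega), if_pos hj]

lemma A32 (hl : 2 ≤ l) (hj : l.choose 2 < j) :
    Aent l (l.choose 2 + l) j = 6 := by
  unfold Aent; rw [if_neg (by omega), if_neg (by omega), if_neg (by omega)]

/-! Pent region lemmas -/
lemma P11 (hi : i ≤ l.choose 2) (hj : j ≤ l.choose 2) :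
    Pent l i j = if i = j then 1 else 0 := by
  unfold Pent; rw [if_pos hi, if_pos hj]

lemma P12 (hl : 2 ≤ l) (hi : i ≤ l.choose 2) (hj1 : l.choose 2 < j) (hj2 : j ≤ l.choose 2 + (l-1)) :
    Pent l i j = Cent (blk i) (pos i) (j - l.choose 2) := by
  unfold Pent; rw [if_pos hi, if_neg (by omega), if_pos hj2]

lemma P13 (hl : 2 ≤ l) (hi : i ≤ l.choose 2) :
    Pent l i (l.choose 2 + l) = 1 := by
  unfold Pent; rw [if_pos hi, if_neg (by omega), if_neg (by omega)]

lemma P21 (hi : l.choose 2 < i) (hj : j ≤ l.choose 2) :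
    Pent l i j = 0 := by
  unfold Pent; rw [if_neg (by omega), if_pos hj]

lemma P22 (hl : 2 ≤ l) (hi1 : l.choose 2 < i) (hi2 : i ≤ l.choose 2 + (l-1))
    (hj1 : l.choose 2 < j) (hj2 : j ≤ l.choose 2 + (l-1)) :
    Pent l i j = if i = j then 1 else 0 := by
  unfold Pent
  rw [if_neg (by omega), if_neg (by omega)]
  rw [cent_lt (by omega : i - l.choose 2 < l)]
  split_ifs <;> omega

lemma P23 (hl : 2 ≤ l) (hi1 : l.choose 2 < i) (hi2 : i ≤ l.choose 2 + (l-1)) :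
    Pent l i (l.choose 2 + l) = 1 := by
  unfold Pent
  rw [if_neg (by omega), if_neg (by omega)]
  rw [cent_lt (by omega : i - l.choose 2 < l)]
  rw [if_neg (by omega), if_pos (by omega)]
  norm_num

lemma P32 (hl : 2 ≤ l) (hj : j ≤ l.choose 2 + (l-1)) :
    Pent l (l.choose 2 + l) j = 0 := by
  unfold Pent
  rcases le_or_gt j (l.choose 2) with hj2 | hj2
  · rw [if_neg (by omega), if_pos hj2]
  · rw [if_neg (by omega), if_neg (by omega)]
    have : l.choose 2 + l - l.choose 2 = l := by omega
    rw [this, cent_self, if_neg (by omega)]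

lemma P33 (hl : 2 ≤ l) : Pent l (l.choose 2 + l) (l.choose 2 + l) = 2 := by
  unfold Pent
  rw [if_neg (by omega), if_neg (by omega)]
  have : l.choose 2 + l - l.choose 2 = l := by omega
  rw [this, cent_self, if_pos rfl]

/-! Ptent region lemmas -/
lemma Pt1 (hl : 2 ≤ l) (hi1 : 1 ≤ i) (hi : i ≤ l.choose 2) (hr1 : 1 ≤ r)
    (hrN : r ≤ l.choose 2 + l) :
    Ptent l i r = if i = r then 1 else 0 := by
  unfold Ptent
  rcases eq_or_ne i r with he | he
  · rw [if_pos he, if_pos he, P11 hi hi, if_pos rfl]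
  · rw [if_neg he, if_neg he]
    rw [if_neg (by rw [choose_succ]; omega)]
    rcases le_or_gt r (l.choose 2) with h1 | h1
    · rw [P11 h1 hi, if_neg (fun h => he h.symm), neg_zero]
    · rcases le_or_gt r (l.choose 2 + (l-1)) with h2 | h2
      · rw [P21 h1 hi, neg_zero]
      · have : r = l.choose 2 + l := by omega
        subst this
        rw [P21 (by omega) hi, neg_zero]

lemma Pt21 (hl : 2 ≤ l) (hi1 : l.choose 2 < i) (hi2 : i ≤ l.choose 2 + (l-1))
    (hr1 : 1 ≤ r) (hr : r ≤ l.choose 2) :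
    Ptent l i r = -(Cent (blk r) (pos r) (i - l.choose 2)) := by
  unfold Ptent
  rw [if_neg (by omega), if_neg (by rw [choose_succ]; omega),
    P12 hl hr (by omega) (by omega)]

lemma Pt22 (hl : 2 ≤ l) (hi1 : l.choose 2 < i) (hi2 : i ≤ l.choose 2 + (l-1))
    (hr1 : l.choose 2 < r) (hr : r ≤ l.choose 2 + (l-1)) :
    Ptent l i r = if i = r then 1 else 0 := by
  unfold Ptent
  rcases eq_or_ne i r with he | he
  · rw [if_pos he, if_pos he, P22 hl hi1 hi2 hi1 hi2, if_pos rfl]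
  · rw [if_neg he, if_neg he, if_neg (by rw [choose_succ]; omega)]
    rw [P22 hl hr1 hr hi1 hi2, if_neg (fun h => he h.symm), neg_zero]

lemma Pt23 (hl : 2 ≤ l) (hi1 : l.choose 2 < i) (hi2 : i ≤ l.choose 2 + (l-1)) :
    Ptent l i (l.choose 2 + l) = 0 := by
  unfold Ptent
  rw [if_neg (by omega), if_neg (by rw [choose_succ]; omega),
    P32 hl (by omega), neg_zero]

lemma Pt31 (hl : 2 ≤ l) (hr1 : 1 ≤ r) (hr : r ≤ l.choose 2) :
    Ptent l (l.choose 2 + l) r = 1 := by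
  unfold Ptent
  rw [if_neg (by omega), if_pos ⟨by rw [choose_succ], hr⟩]

lemma Pt32 (hl : 2 ≤ l) (hr1 : l.choose 2 < r) (hr : r ≤ l.choose 2 + (l-1)) :
    Ptent l (l.choose 2 + l) r = -1 := by
  unfold Ptent
  rw [if_neg (by omega), if_neg (by omega), P23 hl hr1 hr]

lemma Pt33 (hl : 2 ≤ l) :
    Ptent l (l.choose 2 + l) (l.choose 2 + l) = 2 := by
  unfold Ptent
  rw [if_pos rfl, P33 hl]

end Part4
section Part5
open Finset

/-- The matrix `P̃ * A` (upper triangular form), entrywise. -/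
def Uent (l i j : ℕ) : ℤ :=
  if i ≤ l.choose 2 then Aent l i j
  else if i ≤ l.choose 2 + (l-1) then
    (if j = i then 4*((l:ℤ)+3) else if j = l.choose 2 + l then -2*((l:ℤ)+3) else 0)
  else (if j = l.choose 2 + l then ((l:ℤ)+2)*((l:ℤ)+3) else 0)

/-- Diagonal entries of `P̃ * A * P`. -/
def dent (l r : ℕ) : ℤ :=
  if r ≤ l.choose 2 then 4 else if r ≤ l.choose 2 + (l-1) then 4*((l:ℤ)+3)
  else 2*((l:ℤ)+2)*((l:ℤ)+3)

lemma sum_split3 {M : Type*} [AddCommMonoid M] {l : ℕ} (hl : 2 ≤ l) (g : ℕ → M) :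
    ∑ r ∈ Finset.Icc 1 (l.choose 2 + l), g r
      = (∑ r ∈ Finset.Icc 1 (l.choose 2), g r)
        + (∑ r ∈ Finset.Ioc (l.choose 2) (l.choose 2 + (l-1)), g r)
        + g (l.choose 2 + l) := by
  have h0 : Finset.Icc 1 (l.choose 2 + l) = Finset.Ioc 0 (l.choose 2 + l) := by
    rw [← Finset.Icc_add_one_left_eq_Ioc, zero_add]
  have h1 : Finset.Icc 1 (l.choose 2) = Finset.Ioc 0 (l.choose 2) := by
    rw [← Finset.Icc_add_one_left_eq_Ioc, zero_add]
  rw [h0, h1, ← Finset.sum_Ioc_consecutive g (Nat.zero_le (l.choose 2))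
    (by omega : l.choose 2 ≤ l.choose 2 + l), add_assoc]
  congr 1
  rw [← Finset.sum_Ioc_consecutive g (by omega : l.choose 2 ≤ l.choose 2 + (l-1))
    (by omega : l.choose 2 + (l-1) ≤ l.choose 2 + l)]
  congr 1
  have h2 : l.choose 2 + l = (l.choose 2 + (l-1)) + 1 := by omega
  rw [h2, Nat.Ioc_succ_singleton, Finset.sum_singleton]

lemma fin_sum {M : Type*} [AddCommMonoid M] (n : ℕ) (g : ℕ → M) :
    ∑ k : Fin n, g (k.1 + 1) = ∑ r ∈ Finset.Icc 1 n, g r := by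
  rw [Fin.sum_univ_eq_sum_range (fun i => g (i+1)) n, ← Finset.Ico_add_one_right_eq_Icc,
    Finset.sum_Ico_eq_sum_range]
  simp [Nat.add_comm]

/-- Row `i ≤ M` of `P̃ * A`. -/
lemma sumPA1 {l i j : ℕ} (hl : 2 ≤ l) (hi1 : 1 ≤ i) (hi : i ≤ l.choose 2) :
    ∑ r ∈ Finset.Icc 1 (l.choose 2 + l), Ptent l i r * Aent l r j = Uent l i j := by
  have key : ∀ r ∈ Finset.Icc 1 (l.choose 2 + l),
      Ptent l i r * Aent l r j = if i = r then Aent l r j else 0 := by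
    intro r hr
    rw [Finset.mem_Icc] at hr
    rw [Pt1 hl hi1 hi hr.1 hr.2, ite_mul, one_mul, zero_mul]
  rw [Finset.sum_congr rfl key, Finset.sum_ite_eq,
    if_pos (Finset.mem_Icc.mpr ⟨hi1, by omega⟩)]
  unfold Uent
  rw [if_pos hi]

/-- Row `M < i ≤ M + (l-1)` of `P̃ * A`. -/
lemma sumPA2 {l i j : ℕ} (hl : 2 ≤ l) (hi1 : l.choose 2 < i) (hi2 : i ≤ l.choose 2 + (l-1))
    (hj1 : 1 ≤ j) (hjN : j ≤ l.choose 2 + l) :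
    ∑ r ∈ Finset.Icc 1 (l.choose 2 + l), Ptent l i r * Aent l r j = Uent l i j := by
  have hUi : Uent l i j = if j = i then 4*((l:ℤ)+3) else if j = l.choose 2 + l then -2*((l:ℤ)+3) else 0 := by
    unfold Uent; rw [if_neg (by omega), if_pos hi2]
  rw [sum_split3 hl, hUi]
  have e3 : Ptent l i (l.choose 2 + l) * Aent l (l.choose 2 + l) j = 0 := by
    rw [Pt23 hl hi1 hi2, zero_mul]
  rcases le_or_gt j (l.choose 2) with hjm | hjm
  · -- j in first region
    have e1 : ∑ r ∈ Finset.Icc 1 (l.choose 2), Ptent l i r * Aent l r j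
        = (-4) * Cent (blk j) (pos j) (i - l.choose 2) := by
      have key : ∀ r ∈ Finset.Icc 1 (l.choose 2), Ptent l i r * Aent l r j
          = if j = r then (-4) * Cent (blk r) (pos r) (i - l.choose 2) else 0 := by
        intro r hr
        rw [Finset.mem_Icc] at hr
        rw [Pt21 hl hi1 hi2 hr.1 hr.2, A11 hr.2 hjm]
        rcases eq_or_ne j r with he | he
        · rw [if_pos he.symm, if_pos he]; ring
        · rw [if_neg (fun h => he h.symm), if_neg he, mul_zero]
      rw [Finset.sum_congr rfl key, Finset.sum_ite_eq,
        if_pos (Finset.mem_Icc.mpr ⟨hj1, hjm⟩)]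
    have e2 : ∑ r ∈ Finset.Ioc (l.choose 2) (l.choose 2 + (l-1)), Ptent l i r * Aent l r j
        = 4 * Cent (blk j) (pos j) (i - l.choose 2) := by
      have key : ∀ r ∈ Finset.Ioc (l.choose 2) (l.choose 2 + (l-1)), Ptent l i r * Aent l r j
          = if i = r then 4 * Cent (blk j) (pos j) (r - l.choose 2) else 0 := by
        intro r hr
        rw [Finset.mem_Ioc] at hr
        rw [Pt22 hl hi1 hi2 hr.1 hr.2, A21 hr.1 hr.2 hjm, ite_mul, one_mul, zero_mul]
      rw [Finset.sum_congr rfl key, Finset.sum_ite_eq,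
        if_pos (Finset.mem_Ioc.mpr ⟨hi1, hi2⟩)]
    rw [e1, e2, e3, if_neg (by omega), if_neg (by omega)]
    ring
  · rcases le_or_gt j (l.choose 2 + (l-1)) with hjm2 | hjm2
    · -- j in middle region
      have e2 : ∑ r ∈ Finset.Ioc (l.choose 2) (l.choose 2 + (l-1)), Ptent l i r * Aent l r j
          = if i = j then 4 else -4 := by
        have key : ∀ r ∈ Finset.Ioc (l.choose 2) (l.choose 2 + (l-1)), Ptent l i r * Aent l r j
            = if i = r then (if r = j then (4:ℤ) else -4) else 0 := by
          intro r hr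
          rw [Finset.mem_Ioc] at hr
          rw [Pt22 hl hi1 hi2 hr.1 hr.2, A22 hr.1 hr.2 hjm hjm2, ite_mul, one_mul, zero_mul]
        rw [Finset.sum_congr rfl key, Finset.sum_ite_eq,
          if_pos (Finset.mem_Ioc.mpr ⟨hi1, hi2⟩)]
      rcases eq_or_ne i j with he | he
      · -- diagonal entry
        have e1 : ∑ r ∈ Finset.Icc 1 (l.choose 2), Ptent l i r * Aent l r j
            = 4 * ((l:ℤ) + 2) := by
          have key : ∀ r ∈ Finset.Icc 1 (l.choose 2), Ptent l i r * Aent l r j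
              = 4 * (Cent (blk r) (pos r) (i - l.choose 2)
                  * Cent (blk r) (pos r) (j - l.choose 2)) := by
            intro r hr
            rw [Finset.mem_Icc] at hr
            rw [Pt21 hl hi1 hi2 hr.1 hr.2, A12 hl hr.2 hjm hjm2]
            ring
          rw [Finset.sum_congr rfl key, ← Finset.mul_sum, he,
            S2diag hl (by omega) (by omega)]
        rw [e1, e2, e3, if_pos he, if_pos he.symm]
        ring
      · have e1 : ∑ r ∈ Finset.Icc 1 (l.choose 2), Ptent l i r * Aent l r j
            = 4 := by
          have key : ∀ r ∈ Finset.Icc 1 (l.choose 2), Ptent l i r * Aent l r j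
              = 4 * (Cent (blk r) (pos r) (i - l.choose 2)
                  * Cent (blk r) (pos r) (j - l.choose 2)) := by
            intro r hr
            rw [Finset.mem_Icc] at hr
            rw [Pt21 hl hi1 hi2 hr.1 hr.2, A12 hl hr.2 hjm hjm2]
            ring
          rw [Finset.sum_congr rfl key, ← Finset.mul_sum,
            S2off hl (by omega) (by omega) (by omega) (by omega) (by omega)]
          ring
        rw [e1, e2, e3, if_neg he, if_neg (fun h => he h.symm), if_neg (by omega)]
        ring
    · -- j = M + l
      have hje : j = l.choose 2 + l := by omega
      subst hje
      have e1 : ∑ r ∈ Finset.Icc 1 (l.choose 2), Ptent l i r * Aent l r (l.choose 2 + l)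
          = (-2) * (l:ℤ) := by
        have key : ∀ r ∈ Finset.Icc 1 (l.choose 2), Ptent l i r * Aent l r (l.choose 2 + l)
            = (-2) * Cent (blk r) (pos r) (i - l.choose 2) := by
          intro r hr
          rw [Finset.mem_Icc] at hr
          rw [Pt21 hl hi1 hi2 hr.1 hr.2, A13 hl hr.2]
          ring
        rw [Finset.sum_congr rfl key, ← Finset.mul_sum, S1 hl (by omega) (by omega)]
      have e2 : ∑ r ∈ Finset.Ioc (l.choose 2) (l.choose 2 + (l-1)),
            Ptent l i r * Aent l r (l.choose 2 + l) = -6 := by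
        have key : ∀ r ∈ Finset.Ioc (l.choose 2) (l.choose 2 + (l-1)),
            Ptent l i r * Aent l r (l.choose 2 + l) = if i = r then (-6:ℤ) else 0 := by
          intro r hr
          rw [Finset.mem_Ioc] at hr
          rw [Pt22 hl hi1 hi2 hr.1 hr.2, A23 hl hr.1 hr.2, ite_mul, one_mul, zero_mul]
        rw [Finset.sum_congr rfl key, Finset.sum_ite_eq,
          if_pos (Finset.mem_Ioc.mpr ⟨hi1, hi2⟩)]
      rw [e1, e2, e3, if_neg (by omega), if_pos rfl]
      ring

/-- Row `i = M + l` of `P̃ * A`. -/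
lemma sumPA3 {l j : ℕ} (hl : 2 ≤ l) (hj1 : 1 ≤ j) (hjN : j ≤ l.choose 2 + l) :
    ∑ r ∈ Finset.Icc 1 (l.choose 2 + l), Ptent l (l.choose 2 + l) r * Aent l r j
      = Uent l (l.choose 2 + l) j := by
  have hUi : Uent l (l.choose 2 + l) j
      = if j = l.choose 2 + l then ((l:ℤ)+2)*((l:ℤ)+3) else 0 := by
    unfold Uent; rw [if_neg (by omega), if_neg (by omega)]
  rw [sum_split3 hl, hUi]
  have e3 : Ptent l (l.choose 2 + l) (l.choose 2 + l) * Aent l (l.choose 2 + l) j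
      = 2 * Aent l (l.choose 2 + l) j := by rw [Pt33 hl]
  rcases le_or_gt j (l.choose 2) with hjm | hjm
  · have e1 : ∑ r ∈ Finset.Icc 1 (l.choose 2), Ptent l (l.choose 2 + l) r * Aent l r j
        = 4 := by
      have key : ∀ r ∈ Finset.Icc 1 (l.choose 2), Ptent l (l.choose 2 + l) r * Aent l r j
          = if j = r then (4:ℤ) else 0 := by
        intro r hr
        rw [Finset.mem_Icc] at hr
        rw [Pt31 hl hr.1 hr.2, A11 hr.2 hjm, one_mul]
        rcases eq_or_ne j r with he | he
        · rw [if_pos he.symm, if_pos he]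
        · rw [if_neg (fun h => he h.symm), if_neg he]
      rw [Finset.sum_congr rfl key, Finset.sum_ite_eq,
        if_pos (Finset.mem_Icc.mpr ⟨hj1, hjm⟩)]
    have e2 : ∑ r ∈ Finset.Ioc (l.choose 2) (l.choose 2 + (l-1)),
          Ptent l (l.choose 2 + l) r * Aent l r j = -8 := by
      have key : ∀ r ∈ Finset.Ioc (l.choose 2) (l.choose 2 + (l-1)),
          Ptent l (l.choose 2 + l) r * Aent l r j
            = (-4) * Cent (blk j) (pos j) (r - l.choose 2) := by
        intro r hr
        rw [Finset.mem_Ioc] at hr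
        rw [Pt32 hl hr.1 hr.2, A21 hr.1 hr.2 hjm]
        ring
      rw [Finset.sum_congr rfl key]
      rw [sum_shift (fun r => (-4) * Cent (blk j) (pos j) (r - l.choose 2)) (l.choose 2) (l-1)]
      have key2 : ∀ h ∈ Finset.Icc 1 (l-1),
          (-4) * Cent (blk j) (pos j) (l.choose 2 + h - l.choose 2)
            = (-4) * Cent (blk j) (pos j) h := by
        intro h _
        congr 2
        omega
      rw [Finset.sum_congr rfl key2, ← Finset.mul_sum,
        rowsum (pos_ge_one hj1) (pos_le_blk hj1) (blk_ge_one hj1) (blk_le_of_le hl hjm)]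
      ring
    rw [e1, e2, e3, A31 hl hjm, if_neg (by omega)]
    ring
  · rcases le_or_gt j (l.choose 2 + (l-1)) with hjm2 | hjm2
    · have e1 : ∑ r ∈ Finset.Icc 1 (l.choose 2), Ptent l (l.choose 2 + l) r * Aent l r j
          = (-4) * (l:ℤ) := by
        have key : ∀ r ∈ Finset.Icc 1 (l.choose 2), Ptent l (l.choose 2 + l) r * Aent l r j
            = (-4) * Cent (blk r) (pos r) (j - l.choose 2) := by
          intro r hr
          rw [Finset.mem_Icc] at hr
          rw [Pt31 hl hr.1 hr.2, A12 hl hr.2 hjm hjm2]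
          ring
        rw [Finset.sum_congr rfl key, ← Finset.mul_sum, S1 hl (by omega) (by omega)]
      have e2 : ∑ r ∈ Finset.Ioc (l.choose 2) (l.choose 2 + (l-1)),
            Ptent l (l.choose 2 + l) r * Aent l r j = 4 * ((l:ℤ) - 1) - 8 := by
        have key : ∀ r ∈ Finset.Ioc (l.choose 2) (l.choose 2 + (l-1)),
            Ptent l (l.choose 2 + l) r * Aent l r j
              = 4 - (if j = r then (8:ℤ) else 0) := by
          intro r hr
          rw [Finset.mem_Ioc] at hr
          rw [Pt32 hl hr.1 hr.2, A22 hr.1 hr.2 hjm hjm2]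
          rcases eq_or_ne j r with he | he
          · rw [if_pos he.symm, if_pos he]; ring
          · rw [if_neg (fun h => he h.symm), if_neg he]; ring
        rw [Finset.sum_congr rfl key, Finset.sum_sub_distrib, Finset.sum_const,
          Finset.sum_ite_eq, if_pos (Finset.mem_Ioc.mpr ⟨hjm, hjm2⟩), Nat.card_Ioc]
        simp only [nsmul_eq_mul]
        have : (l.choose 2 + (l-1) - l.choose 2 : ℕ) = l - 1 := by omega
        rw [this]
        push_cast [Nat.cast_sub (by omega : 1 ≤ l)]
        ring
      rw [e1, e2, e3, A32 hl hjm, if_neg (by omega)]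
      ring
    · have hje : j = l.choose 2 + l := by omega
      subst hje
      have e1 : ∑ r ∈ Finset.Icc 1 (l.choose 2),
            Ptent l (l.choose 2 + l) r * Aent l r (l.choose 2 + l)
          = 2 * (l.choose 2 : ℤ) := by
        have key : ∀ r ∈ Finset.Icc 1 (l.choose 2),
            Ptent l (l.choose 2 + l) r * Aent l r (l.choose 2 + l) = (2:ℤ) := by
          intro r hr
          rw [Finset.mem_Icc] at hr
          rw [Pt31 hl hr.1 hr.2, A13 hl hr.2, one_mul]
        rw [Finset.sum_congr rfl key, Finset.sum_const, Nat.card_Icc]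
        simp only [nsmul_eq_mul]
        have : (l.choose 2 + 1 - 1 : ℕ) = l.choose 2 := by omega
        rw [this]
        ring
      have e2 : ∑ r ∈ Finset.Ioc (l.choose 2) (l.choose 2 + (l-1)),
            Ptent l (l.choose 2 + l) r * Aent l r (l.choose 2 + l) = 6 * ((l:ℤ) - 1) := by
        have key : ∀ r ∈ Finset.Ioc (l.choose 2) (l.choose 2 + (l-1)),
            Ptent l (l.choose 2 + l) r * Aent l r (l.choose 2 + l) = (6:ℤ) := by
          intro r hr
          rw [Finset.mem_Ioc] at hr
          rw [Pt32 hl hr.1 hr.2, A23 hl hr.1 hr.2]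
          ring
        rw [Finset.sum_congr rfl key, Finset.sum_const, Nat.card_Ioc]
        simp only [nsmul_eq_mul]
        have : (l.choose 2 + (l-1) - l.choose 2 : ℕ) = l - 1 := by omega
        rw [this]
        push_cast [Nat.cast_sub (by omega : 1 ≤ l)]
        ring
      rw [e1, e2, e3, A32 hl (by omega), if_pos rfl]
      have hm : 2 * (l.choose 2 : ℤ) = (l:ℤ) * ((l:ℤ) - 1) := by
        have h := two_mul_choose (by omega : 1 ≤ l)
        have h2 : ((2 * l.choose 2 : ℕ) : ℤ) = ((l * (l - 1) : ℕ) : ℤ) := by rw [h]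
        push_cast [Nat.cast_sub (by omega : 1 ≤ l)] at h2
        linarith
      linear_combination hm

end Part5
section Part6
open Finset

lemma sumUP1 {l i j : ℕ} (hl : 2 ≤ l) (hi1 : 1 ≤ i) (hi : i ≤ l.choose 2)
    (hj1 : 1 ≤ j) (hjN : j ≤ l.choose 2 + l) :
    ∑ r ∈ Finset.Icc 1 (l.choose 2 + l), Uent l i r * Pent l r j
      = if i = j then dent l i else 0 := by
  have hU : ∀ r, Uent l i r = Aent l i r := by
    intro r; unfold Uent; rw [if_pos hi]
  have hd : dent l i = 4 := by unfold dent; rw [if_pos hi]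
  simp only [hU]
  rw [sum_split3 hl, hd]
  have e3 : Aent l i (l.choose 2 + l) * Pent l (l.choose 2 + l) j
      = 2 * Pent l (l.choose 2 + l) j := by rw [A13 hl hi]
  rcases le_or_gt j (l.choose 2) with hjm | hjm
  · have e1 : ∑ r ∈ Finset.Icc 1 (l.choose 2), Aent l i r * Pent l r j
        = if i = j then 4 else 0 := by
      have key : ∀ r ∈ Finset.Icc 1 (l.choose 2), Aent l i r * Pent l r j
          = if i = r then 4 * Pent l r j else 0 := by
        intro r hr
        rw [Finset.mem_Icc] at hr
        rw [A11 hi hr.2, ite_mul, zero_mul]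
      rw [Finset.sum_congr rfl key, Finset.sum_ite_eq,
        if_pos (Finset.mem_Icc.mpr ⟨hi1, hi⟩), P11 hi hjm]
      split_ifs <;> ring
    have e2 : ∑ r ∈ Finset.Ioc (l.choose 2) (l.choose 2 + (l-1)), Aent l i r * Pent l r j
        = 0 := by
      apply Finset.sum_eq_zero
      intro r hr
      rw [Finset.mem_Ioc] at hr
      rw [P21 hr.1 hjm, mul_zero]
    rw [e1, e2, e3, P21 (by omega) hjm]
    ring
  · rcases le_or_gt j (l.choose 2 + (l-1)) with hjm2 | hjm2
    · have e1 : ∑ r ∈ Finset.Icc 1 (l.choose 2), Aent l i r * Pent l r j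
          = 4 * Cent (blk i) (pos i) (j - l.choose 2) := by
        have key : ∀ r ∈ Finset.Icc 1 (l.choose 2), Aent l i r * Pent l r j
            = if i = r then 4 * Pent l r j else 0 := by
          intro r hr
          rw [Finset.mem_Icc] at hr
          rw [A11 hi hr.2, ite_mul, zero_mul]
        rw [Finset.sum_congr rfl key, Finset.sum_ite_eq,
          if_pos (Finset.mem_Icc.mpr ⟨hi1, hi⟩), P12 hl hi hjm hjm2]
      have e2 : ∑ r ∈ Finset.Ioc (l.choose 2) (l.choose 2 + (l-1)), Aent l i r * Pent l r j
          = (-4) * Cent (blk i) (pos i) (j - l.choose 2) := by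
        have key : ∀ r ∈ Finset.Ioc (l.choose 2) (l.choose 2 + (l-1)), Aent l i r * Pent l r j
            = if j = r then (-4) * Cent (blk i) (pos i) (r - l.choose 2) else 0 := by
          intro r hr
          rw [Finset.mem_Ioc] at hr
          rw [A12 hl hi hr.1 hr.2, P22 hl hr.1 hr.2 hjm hjm2]
          rcases eq_or_ne j r with he | he
          · rw [if_pos he.symm, if_pos he]; ring
          · rw [if_neg (fun h => he h.symm), if_neg he, mul_zero]
        rw [Finset.sum_congr rfl key, Finset.sum_ite_eq,
          if_pos (Finset.mem_Ioc.mpr ⟨hjm, hjm2⟩)]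
      rw [e1, e2, e3, P32 hl (by omega), if_neg (by omega)]
      ring
    · have hje : j = l.choose 2 + l := by omega
      subst hje
      have e1 : ∑ r ∈ Finset.Icc 1 (l.choose 2), Aent l i r * Pent l r (l.choose 2 + l)
          = 4 := by
        have key : ∀ r ∈ Finset.Icc 1 (l.choose 2), Aent l i r * Pent l r (l.choose 2 + l)
            = if i = r then 4 * Pent l r (l.choose 2 + l) else 0 := by
          intro r hr
          rw [Finset.mem_Icc] at hr
          rw [A11 hi hr.2, ite_mul, zero_mul]
        rw [Finset.sum_congr rfl key, Finset.sum_ite_eq,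
          if_pos (Finset.mem_Icc.mpr ⟨hi1, hi⟩), P13 hl hi, mul_one]
      have e2 : ∑ r ∈ Finset.Ioc (l.choose 2) (l.choose 2 + (l-1)),
            Aent l i r * Pent l r (l.choose 2 + l) = -8 := by
        have key : ∀ r ∈ Finset.Ioc (l.choose 2) (l.choose 2 + (l-1)),
            Aent l i r * Pent l r (l.choose 2 + l)
              = (-4) * Cent (blk i) (pos i) (r - l.choose 2) := by
          intro r hr
          rw [Finset.mem_Ioc] at hr
          rw [A12 hl hi hr.1 hr.2, P23 hl hr.1 hr.2, mul_one]
        rw [Finset.sum_congr rfl key,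
          sum_shift (fun r => (-4) * Cent (blk i) (pos i) (r - l.choose 2)) (l.choose 2) (l-1)]
        have key2 : ∀ h ∈ Finset.Icc 1 (l-1),
            (-4) * Cent (blk i) (pos i) (l.choose 2 + h - l.choose 2)
              = (-4) * Cent (blk i) (pos i) h := by
          intro h _; congr 2; omega
        rw [Finset.sum_congr rfl key2, ← Finset.mul_sum,
          rowsum (pos_ge_one hi1) (pos_le_blk hi1) (blk_ge_one hi1) (blk_le_of_le hl hi)]
        ring
      rw [e1, e2, e3, P33 hl, if_neg (by omega)]
      ring

lemma sumUP2 {l i j : ℕ} (hl : 2 ≤ l) (hi1 : l.choose 2 < i) (hi2 : i ≤ l.choose 2 + (l-1))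
    (hj1 : 1 ≤ j) (hjN : j ≤ l.choose 2 + l) :
    ∑ r ∈ Finset.Icc 1 (l.choose 2 + l), Uent l i r * Pent l r j
      = if i = j then dent l i else 0 := by
  have hU : ∀ r, Uent l i r
      = if r = i then 4*((l:ℤ)+3) else if r = l.choose 2 + l then -2*((l:ℤ)+3) else 0 := by
    intro r; unfold Uent; rw [if_neg (by omega), if_pos hi2]
  have hd : dent l i = 4*((l:ℤ)+3) := by unfold dent; rw [if_neg (by omega), if_pos hi2]
  simp only [hU]
  rw [sum_split3 hl, hd]
  have e1 : ∑ r ∈ Finset.Icc 1 (l.choose 2),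
      (if r = i then 4*((l:ℤ)+3) else if r = l.choose 2 + l then -2*((l:ℤ)+3) else 0)
        * Pent l r j = 0 := by
    apply Finset.sum_eq_zero
    intro r hr
    rw [Finset.mem_Icc] at hr
    rw [if_neg (by omega), if_neg (by omega), zero_mul]
  have e2 : ∑ r ∈ Finset.Ioc (l.choose 2) (l.choose 2 + (l-1)),
      (if r = i then 4*((l:ℤ)+3) else if r = l.choose 2 + l then -2*((l:ℤ)+3) else 0)
        * Pent l r j = 4*((l:ℤ)+3) * Pent l i j := by
    have key : ∀ r ∈ Finset.Ioc (l.choose 2) (l.choose 2 + (l-1)),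
        (if r = i then 4*((l:ℤ)+3) else if r = l.choose 2 + l then -2*((l:ℤ)+3) else 0)
          * Pent l r j = if i = r then 4*((l:ℤ)+3) * Pent l r j else 0 := by
      intro r hr
      rw [Finset.mem_Ioc] at hr
      rcases eq_or_ne i r with he | he
      · rw [if_pos he.symm, if_pos he]
      · rw [if_neg (fun h => he h.symm), if_neg (by omega), if_neg he, zero_mul]
    rw [Finset.sum_congr rfl key, Finset.sum_ite_eq,
      if_pos (Finset.mem_Ioc.mpr ⟨hi1, hi2⟩)]
  have e3 : (if l.choose 2 + l = i then 4*((l:ℤ)+3)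
        else if l.choose 2 + l = l.choose 2 + l then -2*((l:ℤ)+3) else 0)
      * Pent l (l.choose 2 + l) j = -2*((l:ℤ)+3) * Pent l (l.choose 2 + l) j := by
    rw [if_neg (by omega), if_pos rfl]
  rw [e1, e2, e3]
  rcases le_or_gt j (l.choose 2) with hjm | hjm
  · rw [P21 hi1 hjm, P21 (by omega) hjm, if_neg (by omega)]
    ring
  · rcases le_or_gt j (l.choose 2 + (l-1)) with hjm2 | hjm2
    · rw [P22 hl hi1 hi2 hjm hjm2, P32 hl (by omega)]
      split_ifs <;> ring
    · have hje : j = l.choose 2 + l := by omega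
      subst hje
      rw [P23 hl hi1 hi2, P33 hl, if_neg (by omega)]
      ring

lemma sumUP3 {l j : ℕ} (hl : 2 ≤ l) (hj1 : 1 ≤ j) (hjN : j ≤ l.choose 2 + l) :
    ∑ r ∈ Finset.Icc 1 (l.choose 2 + l), Uent l (l.choose 2 + l) r * Pent l r j
      = if l.choose 2 + l = j then dent l (l.choose 2 + l) else 0 := by
  have hU : ∀ r, Uent l (l.choose 2 + l) r
      = if r = l.choose 2 + l then ((l:ℤ)+2)*((l:ℤ)+3) else 0 := by
    intro r; unfold Uent; rw [if_neg (by omega), if_neg (by omega)]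
  have hd : dent l (l.choose 2 + l) = 2*((l:ℤ)+2)*((l:ℤ)+3) := by
    unfold dent; rw [if_neg (by omega), if_neg (by omega)]
  simp only [hU]
  rw [sum_split3 hl, hd]
  have e1 : ∑ r ∈ Finset.Icc 1 (l.choose 2),
      (if r = l.choose 2 + l then ((l:ℤ)+2)*((l:ℤ)+3) else 0) * Pent l r j = 0 := by
    apply Finset.sum_eq_zero
    intro r hr
    rw [Finset.mem_Icc] at hr
    rw [if_neg (by omega), zero_mul]
  have e2 : ∑ r ∈ Finset.Ioc (l.choose 2) (l.choose 2 + (l-1)),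
      (if r = l.choose 2 + l then ((l:ℤ)+2)*((l:ℤ)+3) else 0) * Pent l r j = 0 := by
    apply Finset.sum_eq_zero
    intro r hr
    rw [Finset.mem_Ioc] at hr
    rw [if_neg (by omega), zero_mul]
  rw [e1, e2, if_pos rfl]
  rcases le_or_gt j (l.choose 2) with hjm | hjm
  · rw [P21 (by omega) hjm, if_neg (by omega)]
    ring
  · rcases le_or_gt j (l.choose 2 + (l-1)) with hjm2 | hjm2
    · rw [P32 hl hjm2, if_neg (by omega)]
      ring
    · have hje : j = l.choose 2 + l := by omega
      subst hje
      rw [P33 hl, if_pos rfl]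
      ring

end Part6
section Part7
open Finset

variable {l : ℕ}

/-- The product `P̃ * A * P` is the diagonal matrix with entries `dent`. -/
lemma matPAP (hl : 2 ≤ l) :
    Ptmat l * Amat l * Pmat l
      = Matrix.diagonal (fun i : Fin ((l+1).choose 2) => dent l (i.1+1)) := by
  have hN : (l+1).choose 2 = l.choose 2 + l := choose_succ l
  have hPA : Ptmat l * Amat l
      = Matrix.of (fun i j : Fin ((l+1).choose 2) => Uent l (i.1+1) (j.1+1)) := by
    ext i j
    rw [Matrix.mul_apply]
    simp only [Matrix.of_apply]
    have hi2 : i.1 + 1 ≤ l.choose 2 + l := by have := i.2; omega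
    have hj2 : j.1 + 1 ≤ l.choose 2 + l := by have := j.2; omega
    have hIcc : Finset.Icc 1 ((l+1).choose 2) = Finset.Icc 1 (l.choose 2 + l) := by
      rw [hN]
    calc ∑ k : Fin ((l+1).choose 2), Ptmat l i k * Amat l k j
        = ∑ k : Fin ((l+1).choose 2),
            (fun r => Ptent l (i.1+1) r * Aent l r (j.1+1)) (k.1+1) := rfl
      _ = ∑ r ∈ Finset.Icc 1 ((l+1).choose 2),
            Ptent l (i.1+1) r * Aent l r (j.1+1) :=
          fin_sum ((l+1).choose 2) (fun r => Ptent l (i.1+1) r * Aent l r (j.1+1))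
      _ = ∑ r ∈ Finset.Icc 1 (l.choose 2 + l),
            Ptent l (i.1+1) r * Aent l r (j.1+1) := by rw [hIcc]
      _ = Uent l (i.1+1) (j.1+1) := by
          rcases le_or_gt (i.1+1) (l.choose 2) with h1 | h1
          · exact sumPA1 hl (by omega) h1
          · rcases le_or_gt (i.1+1) (l.choose 2 + (l-1)) with h2 | h2
            · exact sumPA2 hl h1 h2 (by omega) hj2
            · have : i.1 + 1 = l.choose 2 + l := by omega
              rw [this]
              exact sumPA3 hl (by omega) hj2
  rw [hPA]
  ext i j
  rw [Matrix.mul_apply, Matrix.diagonal_apply]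
  have hi2 : i.1 + 1 ≤ l.choose 2 + l := by have := i.2; omega
  have hj2 : j.1 + 1 ≤ l.choose 2 + l := by have := j.2; omega
  have hIcc : Finset.Icc 1 ((l+1).choose 2) = Finset.Icc 1 (l.choose 2 + l) := by
    rw [hN]
  calc ∑ k : Fin ((l+1).choose 2),
        (Matrix.of (fun i j : Fin ((l+1).choose 2) => Uent l (i.1+1) (j.1+1))) i k
          * Pmat l k j
      = ∑ k : Fin ((l+1).choose 2),
          (fun r => Uent l (i.1+1) r * Pent l r (j.1+1)) (k.1+1) := rfl
    _ = ∑ r ∈ Finset.Icc 1 ((l+1).choose 2), Uent l (i.1+1) r * Pent l r (j.1+1) :=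
        fin_sum ((l+1).choose 2) (fun r => Uent l (i.1+1) r * Pent l r (j.1+1))
    _ = ∑ r ∈ Finset.Icc 1 (l.choose 2 + l), Uent l (i.1+1) r * Pent l r (j.1+1) := by
        rw [hIcc]
    _ = if i.1 + 1 = j.1 + 1 then dent l (i.1+1) else 0 := by
        rcases le_or_gt (i.1+1) (l.choose 2) with h1 | h1
        · exact sumUP1 hl (by omega) h1 (by omega) hj2
        · rcases le_or_gt (i.1+1) (l.choose 2 + (l-1)) with h2 | h2
          · exact sumUP2 hl h1 h2 (by omega) hj2
          · have heq : i.1 + 1 = l.choose 2 + l := by omega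
            rw [heq]
            exact sumUP3 hl (by omega) hj2
    _ = if i = j then dent l (i.1+1) else 0 := by
        congr 1
        simp only [eq_iff_iff]
        rw [Fin.ext_iff]
        omega

/-- `Cent l` is upper triangular (as an `l × l` matrix). -/
lemma cent_lower_zero {a b : ℕ} (hb : b ≤ l) (hab : a < b) : Cent l b a = 0 := by
  rcases eq_or_ne b l with he | he
  · subst he
    rw [cent_self, if_neg (by omega)]
  · rw [cent_lt (by omega), if_neg (by omega), if_neg (by omega)]
    ring

/-- `P` is upper triangular. -/
lemma Pmat_tri (hl : 2 ≤ l) : (Pmat l).BlockTriangular id := by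
  intro i j hij
  have hN : (l+1).choose 2 = l.choose 2 + l := choose_succ l
  have hij' : j.1 + 1 < i.1 + 1 := by simpa using hij
  have hi2 : i.1 + 1 ≤ l.choose 2 + l := by have := i.2; omega
  show Pent l (i.1+1) (j.1+1) = 0
  set I := i.1+1; set J := j.1+1
  rcases le_or_gt I (l.choose 2) with h1 | h1
  · rw [P11 h1 (by omega), if_neg (by omega)]
  · rcases le_or_gt J (l.choose 2) with h2 | h2
    · exact P21 h1 h2
    · unfold Pent
      rw [if_neg (by omega), if_neg (by omega)]
      exact cent_lower_zero (by omega) (by omega)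

/-- `P̃` is lower triangular. -/
lemma Ptmat_tri (hl : 2 ≤ l) : (Ptmat l).BlockTriangular (OrderDual.toDual ∘ id) := by
  intro i j hij
  have hN : (l+1).choose 2 = l.choose 2 + l := choose_succ l
  have hij' : i.1 + 1 < j.1 + 1 := by simpa using hij
  have hj2 : j.1 + 1 ≤ l.choose 2 + l := by have := j.2; omega
  show Ptent l (i.1+1) (j.1+1) = 0
  set I := i.1+1; set J := j.1+1
  unfold Ptent
  rw [if_neg (by omega), if_neg (by rw [hN]; omega)]
  rcases le_or_gt J (l.choose 2) with h2 | h2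
  · rw [P11 h2 (by omega), if_neg (by omega), neg_zero]
  · rcases le_or_gt I (l.choose 2) with h1 | h1
    · rw [P21 h2 h1, neg_zero]
    · unfold Pent
      rw [if_neg (by omega), if_neg (by omega)]
      rw [cent_lower_zero (by omega) (by omega), neg_zero]

lemma Pmat_diag (hl : 2 ≤ l) (i : Fin ((l+1).choose 2)) :
    Pmat l i i = if i.1 + 1 = l.choose 2 + l then 2 else 1 := by
  have hN : (l+1).choose 2 = l.choose 2 + l := choose_succ l
  have hi2 : i.1 + 1 ≤ l.choose 2 + l := by have := i.2; omega
  show Pent l (i.1+1) (i.1+1) = _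
  rcases le_or_gt (i.1+1) (l.choose 2) with h1 | h1
  · rw [P11 h1 h1, if_pos rfl, if_neg (by omega)]
  · rcases le_or_gt (i.1+1) (l.choose 2 + (l-1)) with h2 | h2
    · rw [P22 hl h1 h2 h1 h2, if_pos rfl, if_neg (by omega)]
    · have he : i.1 + 1 = l.choose 2 + l := by omega
      rw [he, P33 hl, if_pos rfl]

lemma prod_diag_eq_two (hl : 2 ≤ l) (v : Fin ((l+1).choose 2) → ℤ)
    (hv : ∀ i, v i = if i.1 + 1 = l.choose 2 + l then 2 else 1) :
    ∏ i, v i = 2 := by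
  have hN : (l+1).choose 2 = l.choose 2 + l := choose_succ l
  have hpos : 0 < (l+1).choose 2 := by omega
  set b : Fin ((l+1).choose 2) := ⟨(l+1).choose 2 - 1, by omega⟩
  have key : ∀ i ∈ Finset.univ, v i = if i = b then 2 else 1 := by
    intro i _
    rw [hv i]
    congr 1
    simp only [eq_iff_iff, Fin.ext_iff, b, Fin.val_mk]
    have := i.2
    constructor <;> intro h <;> omega
  rw [Finset.prod_congr rfl key, Finset.prod_ite_eq', if_pos (Finset.mem_univ b)]

lemma Pmat_det (hl : 2 ≤ l) : (Pmat l).det = 2 := by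
  rw [Matrix.det_of_upperTriangular (Pmat_tri hl)]
  exact prod_diag_eq_two hl _ (Pmat_diag hl)

lemma Ptmat_diag (hl : 2 ≤ l) (i : Fin ((l+1).choose 2)) :
    Ptmat l i i = if i.1 + 1 = l.choose 2 + l then 2 else 1 := by
  have h : Ptmat l i i = Pmat l i i := by
    show Ptent l (i.1+1) (i.1+1) = Pent l (i.1+1) (i.1+1)
    unfold Ptent
    rw [if_pos rfl]
  rw [h]
  exact Pmat_diag hl i

lemma Ptmat_det (hl : 2 ≤ l) : (Ptmat l).det = 2 := by
  rw [Matrix.det_of_lowerTriangular _ (Ptmat_tri hl)]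
  exact prod_diag_eq_two hl _ (Ptmat_diag hl)

end Part7

/-- For `l ≥ 2` and an odd prime `p`, the rank of the reduction of `A` modulo `p`
(the matrix over `𝔽_p = ZMod p` obtained by applying `ℤ → ZMod p` to every entry of `A`)
equals `binom(l+1,2) − l·ε_p(l+3) − ε_p(l+2)`, where `ε_p(k) = 1` if `p ∣ k` and `0`
otherwise. -/
theorem rank_amat_mod_p (l : ℕ) (hl : 2 ≤ l) (p : ℕ) (hp : p.Prime) (hodd : Odd p) :
    ((Amat l).map (Int.cast : ℤ → ZMod p)).rank =
      Nat.choose (l + 1) 2 - l * (if p ∣ l + 3 then 1 else 0) -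
        (if p ∣ l + 2 then 1 else 0) := by
  haveI : Fact p.Prime := ⟨hp⟩
  have hN : (l+1).choose 2 = l.choose 2 + l := choose_succ l
  have hp2 : ¬ (p ∣ 2) := by
    intro h
    have := (Nat.prime_dvd_prime_iff_eq hp Nat.prime_two).mp h
    subst this
    exact absurd hodd (by decide)
  have h2p : (2 : ZMod p) ≠ 0 := by
    intro h
    rw [show ((2 : ZMod p)) = ((2 : ℕ) : ZMod p) by norm_num,
      ZMod.natCast_eq_zero_iff] at h
    exact hp2 h
  have h4p : (4 : ZMod p) ≠ 0 := by
    rw [show ((4 : ZMod p)) = 2 * 2 by norm_num]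
    exact mul_ne_zero h2p h2p
  set f : ℤ →+* ZMod p := Int.castRingHom (ZMod p) with hf
  -- the mapped product identity
  have hmap : ((Ptmat l).map f) * ((Amat l).map f) * ((Pmat l).map f)
      = Matrix.diagonal (fun i : Fin ((l+1).choose 2) => f (dent l (i.1+1))) := by
    rw [← Matrix.map_mul, ← Matrix.map_mul, matPAP hl]
    exact Matrix.diagonal_map (map_zero f)
  have hdetP : IsUnit ((Pmat l).map f).det := by
    have hh : ((Pmat l).map ⇑f).det = f ((Pmat l).det) := (RingHom.map_det f (Pmat l)).symm
    rw [hh, Pmat_det hl, map_ofNat]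
    exact isUnit_iff_ne_zero.mpr h2p
  have hdetPt : IsUnit ((Ptmat l).map f).det := by
    have hh : ((Ptmat l).map ⇑f).det = f ((Ptmat l).det) := (RingHom.map_det f (Ptmat l)).symm
    rw [hh, Ptmat_det hl, map_ofNat]
    exact isUnit_iff_ne_zero.mpr h2p
  have hrank : ((Amat l).map (Int.cast : ℤ → ZMod p)).rank
      = (Matrix.diagonal (fun i : Fin ((l+1).choose 2) => f (dent l (i.1+1)))).rank := by
    rw [← hmap, Matrix.rank_mul_eq_left_of_isUnit_det _ _ hdetP,
      Matrix.rank_mul_eq_right_of_isUnit_det _ _ hdetPt]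
    rfl
  rw [hrank, Matrix.rank_diagonal]
  -- now count nonzero diagonal entries
  have hcard : Fintype.card {i : Fin ((l+1).choose 2) // f (dent l (i.1+1)) ≠ 0}
      = ∑ r ∈ Finset.Icc 1 (l.choose 2 + l), (if f (dent l r) ≠ 0 then 1 else 0) := by
    rw [Fintype.card_subtype, Finset.card_filter]
    have hIcc : Finset.Icc 1 ((l+1).choose 2) = Finset.Icc 1 (l.choose 2 + l) := by
      rw [hN]
    calc ∑ i : Fin ((l+1).choose 2), (if f (dent l (i.1+1)) ≠ 0 then 1 else 0)
        = ∑ i : Fin ((l+1).choose 2),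
            (fun r => if f (dent l r) ≠ 0 then 1 else 0) (i.1+1) := rfl
      _ = ∑ r ∈ Finset.Icc 1 ((l+1).choose 2), (if f (dent l r) ≠ 0 then 1 else 0) :=
          fin_sum ((l+1).choose 2) (fun r => if f (dent l r) ≠ 0 then 1 else 0)
      _ = ∑ r ∈ Finset.Icc 1 (l.choose 2 + l), (if f (dent l r) ≠ 0 then 1 else 0) := by
          rw [hIcc]
  rw [hcard, sum_split3 hl]
  -- first block
  have e1 : ∑ r ∈ Finset.Icc 1 (l.choose 2), (if f (dent l r) ≠ 0 then 1 else 0)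
      = l.choose 2 := by
    have key : ∀ r ∈ Finset.Icc 1 (l.choose 2),
        (if f (dent l r) ≠ 0 then 1 else 0) = 1 := by
      intro r hr
      rw [Finset.mem_Icc] at hr
      have hd : dent l r = 4 := by unfold dent; rw [if_pos hr.2]
      rw [hd, if_pos (show f (4:ℤ) ≠ 0 by rw [map_ofNat]; exact h4p)]
    rw [Finset.sum_congr rfl key, Finset.sum_const, Nat.card_Icc]
    simp
  -- middle block
  have hc3 : (f (4*((l:ℤ)+3)) = 0) ↔ (p ∣ l + 3) := by
    have : f (4*((l:ℤ)+3)) = (4 : ZMod p) * (((l+3 : ℕ) : ZMod p)) := by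
      simp only [hf, Int.coe_castRingHom]
      push_cast
      ring
    rw [this]
    constructor
    · intro h
      rcases mul_eq_zero.mp h with h' | h'
      · exact absurd h' h4p
      · exact (ZMod.natCast_eq_zero_iff _ _).mp h'
    · intro h
      rw [(ZMod.natCast_eq_zero_iff _ _).mpr h, mul_zero]
  have e2 : ∑ r ∈ Finset.Ioc (l.choose 2) (l.choose 2 + (l-1)),
        (if f (dent l r) ≠ 0 then 1 else 0)
      = (l - 1) * (if p ∣ l + 3 then 0 else 1) := by
    have key : ∀ r ∈ Finset.Ioc (l.choose 2) (l.choose 2 + (l-1)),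
        (if f (dent l r) ≠ 0 then 1 else 0) = (if p ∣ l + 3 then 0 else 1) := by
      intro r hr
      rw [Finset.mem_Ioc] at hr
      have hd : dent l r = 4*((l:ℤ)+3) := by
        unfold dent; rw [if_neg (by omega), if_pos hr.2]
      rw [hd]
      by_cases h3 : p ∣ l + 3
      · rw [if_neg (not_not.mpr (hc3.mpr h3)), if_pos h3]
      · rw [if_pos (fun h => h3 (hc3.mp h)), if_neg h3]
    rw [Finset.sum_congr rfl key, Finset.sum_const, Nat.card_Ioc]
    simp [Nat.mul_comm]
  -- last entry
  have hc23 : (f (2*((l:ℤ)+2)*((l:ℤ)+3)) = 0) ↔ (p ∣ l + 2 ∨ p ∣ l + 3) := by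
    have : f (2*((l:ℤ)+2)*((l:ℤ)+3))
        = (2 : ZMod p) * ((l+2 : ℕ) : ZMod p) * ((l+3 : ℕ) : ZMod p) := by
      simp only [hf, Int.coe_castRingHom]
      push_cast
      ring
    rw [this]
    constructor
    · intro h
      rcases mul_eq_zero.mp h with h' | h'
      · rcases mul_eq_zero.mp h' with h'' | h''
        · exact absurd h'' h2p
        · exact Or.inl ((ZMod.natCast_eq_zero_iff _ _).mp h'')
      · exact Or.inr ((ZMod.natCast_eq_zero_iff _ _).mp h')
    · intro h
      rcases h with h | h
      · rw [(ZMod.natCast_eq_zero_iff _ _).mpr h]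
        ring
      · rw [(ZMod.natCast_eq_zero_iff _ _).mpr h]
        ring
  have e3 : (if f (dent l (l.choose 2 + l)) ≠ 0 then 1 else 0)
      = (if p ∣ l + 2 ∨ p ∣ l + 3 then 0 else 1) := by
    have hd : dent l (l.choose 2 + l) = 2*((l:ℤ)+2)*((l:ℤ)+3) := by
      unfold dent; rw [if_neg (by omega), if_neg (by omega)]
    rw [hd]
    by_cases h23 : p ∣ l + 2 ∨ p ∣ l + 3
    · rw [if_neg (not_not.mpr (hc23.mpr h23)), if_pos h23]
    · rw [if_pos (fun h => h23 (hc23.mp h)), if_neg h23]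
  rw [e1, e2, e3, hN]
  have hnot : ¬ (p ∣ l + 2 ∧ p ∣ l + 3) := by
    rintro ⟨h2, h3⟩
    have : p ∣ 1 := by
      have := Nat.dvd_sub h3 h2
      simpa using this
    have h1p := Nat.le_of_dvd one_pos this
    have := hp.one_lt
    omega
  by_cases h3 : p ∣ l + 3
  · have h2 : ¬ p ∣ l + 2 := fun h2 => hnot ⟨h2, h3⟩
    simp only [if_pos h3, if_neg h2, if_pos (Or.inr h3 : p ∣ l + 2 ∨ p ∣ l + 3)]
    omega
  · by_cases h2 : p ∣ l + 2
    · simp only [if_neg h3, if_pos h2, if_pos (Or.inl h2 : p ∣ l + 2 ∨ p ∣ l + 3)]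
      omega
    · simp only [if_neg h3, if_neg h2,
        if_neg (show ¬(p ∣ l + 2 ∨ p ∣ l + 3) by tauto)]
      omega
end

section
/- Let K be a field of characteristic p > 0, let V be a finite-dimensional K-vector space, and let k ≥ 1 be an integer with p ∣ k and k ≤ dim V. Then the comultiplication map δ : Λ^k V → V ⊗_K Λ^{k−1}V is injective and its image is contained in the kernel of the wedge map m : V ⊗_K Λ^{k−1}V → Λ^k V. In particular, Λ^k V is isomorphic (as a K-vector space) to a subspace of ker m. -/
set_option synthInstance.maxHeartbeats 1000000
set_option maxHeartbeats 1000000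
set_option maxSynthPendingDepth 3

open ExteriorAlgebra TensorProduct

variable (R : Type*) [CommRing R] (V : Type*) [AddCommGroup V] [Module R V]

/-- Multiplying by `ι R v` on the left sends the `n`-th exterior power into the `(n+1)`-st. -/
theorem iota_mul_mem_exteriorPower (v : V) {n : ℕ} {ω : ExteriorAlgebra R V}
    (hω : ω ∈ ⋀[R]^n V) : ι R v * ω ∈ ⋀[R]^(n+1) V := by
  have h : (⋀[R]^(n+1) V : Submodule R (ExteriorAlgebra R V)) =
      LinearMap.range (ι R : V →ₗ[R] ExteriorAlgebra R V) * ⋀[R]^n V := pow_succ' _ n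
  rw [h]
  exact Submodule.mul_mem_mul (LinearMap.mem_range_self _ v) hω

/-- The bilinear map `v ↦ (ω ↦ v ∧ ω) : V → (Λⁿ V → Λ^{n+1} V)`. -/
noncomputable def wedgeCurry (n : ℕ) : V →ₗ[R] (⋀[R]^n V) →ₗ[R] (⋀[R]^(n+1) V) where
  toFun v :=
    { toFun := fun ω => ⟨ι R v * ω.1, iota_mul_mem_exteriorPower R V v ω.2⟩
      map_add' := fun x y => Subtype.ext (by simp [mul_add])
      map_smul' := fun c x => Subtype.ext (by simp [mul_smul_comm]) }
  map_add' v w := LinearMap.ext fun ω => Subtype.ext (by simp [add_mul])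
  map_smul' c v := LinearMap.ext fun ω => Subtype.ext (by simp [smul_mul_assoc])

/-- The wedge map `m : V ⊗ Λⁿ V → Λ^{n+1} V`, determined by
`v ⊗ (v₁ ∧ ⋯ ∧ vₙ) ↦ v ∧ v₁ ∧ ⋯ ∧ vₙ`. -/
noncomputable def wedgeMap (n : ℕ) : V ⊗[R] (⋀[R]^n V) →ₗ[R] ⋀[R]^(n+1) V :=
  TensorProduct.lift (wedgeCurry R V n)

/-- The multilinear map `(v₀, …, vₙ) ↦ vᵢ ⊗ (v₀ ∧ ⋯ ∧ v̂ᵢ ∧ ⋯ ∧ vₙ)`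
(the `i`-th term of the comultiplication, with `0`-based sign conventions). -/
noncomputable def deltaTerm (n : ℕ) (i : Fin (n + 1)) :
    MultilinearMap R (fun _ : Fin (n + 1) => V) (V ⊗[R] (⋀[R]^n V)) where
  toFun v := v i ⊗ₜ[R]
    ⟨ιMulti R n (v ∘ i.succAbove), ιMulti_range R n (Set.mem_range_self _)⟩
  map_update_add' := by
    intro _ v j x y
    rcases eq_or_ne j i with rfl | hj
    · have hc : ∀ z : V, Function.update v j z ∘ j.succAbove = v ∘ j.succAbove := fun z =>
        Function.update_comp_eq_of_forall_ne _ _ fun a => Fin.succAbove_ne j a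
      simp [hc, add_tmul]
    · obtain ⟨j', rfl⟩ := Fin.exists_succAbove_eq hj
      have h1 : ∀ z : V, Function.update v (i.succAbove j') z i = v i := fun z =>
        Function.update_of_ne (Fin.ne_succAbove i j') z v
      have h2 : ∀ z : V, Function.update v (i.succAbove j') z ∘ i.succAbove =
          Function.update (v ∘ i.succAbove) j' z := fun z =>
        Function.update_comp_eq_of_injective v Fin.succAbove_right_injective j' z
      simp only [h1, h2]
      rw [← tmul_add]
      congr 1
      exact Subtype.ext (by simp)
  map_update_smul' := by
    intro _ v j c x
    rcases eq_or_ne j i with rfl | hj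
    · have hc : ∀ z : V, Function.update v j z ∘ j.succAbove = v ∘ j.succAbove := fun z =>
        Function.update_comp_eq_of_forall_ne _ _ fun a => Fin.succAbove_ne j a
      simp [hc, smul_tmul']
    · obtain ⟨j', rfl⟩ := Fin.exists_succAbove_eq hj
      have h1 : ∀ z : V, Function.update v (i.succAbove j') z i = v i := fun z =>
        Function.update_of_ne (Fin.ne_succAbove i j') z v
      have h2 : ∀ z : V, Function.update v (i.succAbove j') z ∘ i.succAbove =
          Function.update (v ∘ i.succAbove) j' z := fun z =>
        Function.update_comp_eq_of_injective v Fin.succAbove_right_injective j' z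
      simp only [h1, h2]
      rw [← tmul_smul]
      congr 1
      exact Subtype.ext (by simp)

@[simp]
theorem deltaTerm_apply (n : ℕ) (i : Fin (n + 1)) (v : Fin (n + 1) → V) :
    deltaTerm R V n i v = v i ⊗ₜ[R]
      ⟨ιMulti R n (v ∘ i.succAbove), ιMulti_range R n (Set.mem_range_self _)⟩ :=
  rfl

/-- A multilinear map that vanishes whenever two *adjacent* arguments are equal vanishes
whenever any two arguments are equal. -/
theorem MultilinearMap.eq_zero_of_eq_of_adjacent {N : Type*} [AddCommGroup N] [Module R N]
    {n : ℕ} (F : MultilinearMap R (fun _ : Fin (n + 1) => V) N)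
    (H : ∀ (w : Fin (n + 1) → V) (c : Fin n), w c.castSucc = w c.succ → F w = 0)
    (v : Fin (n + 1) → V) (x y : Fin (n + 1)) (hvxy : v x = v y) (hxy : x ≠ y) :
    F v = 0 := by
  classical
  -- swapping two adjacent arguments changes the sign
  have hswap : ∀ (v : Fin (n + 1) → V) (c : Fin n),
      F (Function.update (Function.update v c.castSucc (v c.succ)) c.succ (v c.castSucc)) =
        -F v := by
    intro v c
    have hij : c.castSucc ≠ c.succ := (Fin.castSucc_lt_succ (i := c)).ne
    have h0 : F (Function.update (Function.update v c.castSucc (v c.castSucc + v c.succ))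
        c.succ (v c.castSucc + v c.succ)) = 0 := by
      refine H _ c ?_
      rw [Function.update_of_ne hij, Function.update_self, Function.update_self]
    rw [F.map_update_add] at h0
    rw [Function.update_comm hij (v c.castSucc + v c.succ) (v c.castSucc) v,
      Function.update_comm hij (v c.castSucc + v c.succ) (v c.succ) v,
      F.map_update_add, F.map_update_add] at h0
    have T1 : F (Function.update (Function.update v c.succ (v c.castSucc)) c.castSucc
        (v c.castSucc)) = 0 := by
      refine H _ c ?_
      rw [Function.update_self, Function.update_of_ne hij.symm, Function.update_self]
    have T4 : F (Function.update (Function.update v c.succ (v c.succ)) c.castSucc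
        (v c.succ)) = 0 := by
      refine H _ c ?_
      rw [Function.update_self, Function.update_of_ne hij.symm, Function.update_self]
    have T3 : F (Function.update (Function.update v c.succ (v c.succ)) c.castSucc
        (v c.castSucc)) = F v := by
      rw [Function.update_eq_self, Function.update_eq_self]
    have T2 : Function.update (Function.update v c.succ (v c.castSucc)) c.castSucc (v c.succ) =
        Function.update (Function.update v c.castSucc (v c.succ)) c.succ (v c.castSucc) :=
      Function.update_comm hij.symm (v c.castSucc) (v c.succ) v
    rw [T1, T2, T3, T4] at h0
    -- h0 : 0 = (0 + F(swapped)) + (F v + 0)  (up to arrangement)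
    have h0' : F (Function.update (Function.update v c.castSucc (v c.succ)) c.succ
        (v c.castSucc)) + F v = 0 := by linear_combination (norm := abel) h0
    exact eq_neg_of_add_eq_zero_left h0'
  -- main induction on the distance between the two equal coordinates
  have aux : ∀ d : ℕ, ∀ (v : Fin (n + 1) → V) (x y : Fin (n + 1)), x < y →
      (y : ℕ) = (x : ℕ) + d + 1 → v x = v y → F v = 0 := by
    intro d
    induction d with
    | zero =>
      intro v x y hlt hyx hv
      have hxn : (x : ℕ) < n := by have := y.isLt; omega
      have hcx : (⟨(x : ℕ), hxn⟩ : Fin n).castSucc = x := by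
        apply Fin.ext; simp
      have hcy : (⟨(x : ℕ), hxn⟩ : Fin n).succ = y := by
        apply Fin.ext; simp [hyx]
      exact H v ⟨(x : ℕ), hxn⟩ (by rw [hcx, hcy]; exact hv)
    | succ d ih =>
      intro v x y hlt hyx hv
      have hzn : (y : ℕ) - 1 < n := by have := y.isLt; omega
      set c : Fin n := ⟨(y : ℕ) - 1, hzn⟩ with hc
      have hcy : c.succ = y := by apply Fin.ext; simp [hc]; omega
      have hxz : x ≠ c.castSucc := by
        intro h
        have : (x : ℕ) = (y : ℕ) - 1 := by rw [h]; simp [hc]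
        omega
      have hxy' : x ≠ c.succ := by rw [hcy]; exact hlt.ne
      set v' := Function.update (Function.update v c.castSucc (v c.succ)) c.succ
        (v c.castSucc) with hv'
      have hvx' : v' x = v x := by
        rw [hv', Function.update_of_ne hxy', Function.update_of_ne hxz]
      have hvz' : v' c.castSucc = v y := by
        rw [hv', Function.update_of_ne (Fin.castSucc_lt_succ (i := c)).ne, Function.update_self, hcy]
      have hlt' : x < c.castSucc := by
        rw [Fin.lt_iff_val_lt_val]; simp [hc]; omega
      have hdist : ((c.castSucc : Fin (n + 1)) : ℕ) = (x : ℕ) + d + 1 := by simp [hc]; omega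
      have h0 : F v' = 0 := ih v' x c.castSucc hlt' hdist (by rw [hvx', hvz', hv])
      have h1 : F v' = -F v := hswap v c
      rw [h0] at h1
      exact neg_eq_zero.mp h1.symm
  rcases hxy.lt_or_gt with h | h
  · have hn : (x : ℕ) < (y : ℕ) := h
    exact aux ((y : ℕ) - (x : ℕ) - 1) v x y h (by omega) hvxy
  · have hn : (y : ℕ) < (x : ℕ) := h
    exact aux ((x : ℕ) - (y : ℕ) - 1) v y x h (by omega) hvxy.symm

/-- The comultiplication sum vanishes on tuples with two equal adjacent entries. -/
theorem deltaSum_adjacent_eq_zero (n : ℕ) (w : Fin (n + 1) → V) (c : Fin n)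
    (hwc : w c.castSucc = w c.succ) :
    (∑ i : Fin (n + 1), ((-1 : R) ^ (i : ℕ)) • deltaTerm R V n i) w = 0 := by
  classical
  rw [MultilinearMap.sum_apply]
  simp only [MultilinearMap.smul_apply, deltaTerm_apply]
  have hcc : c.castSucc ≠ c.succ := (Fin.castSucc_lt_succ (i := c)).ne
  rw [← Finset.sum_subset
    (Finset.subset_univ ({c.castSucc, c.succ} : Finset (Fin (n + 1))))]
  · -- the two remaining (adjacent) terms cancel
    rw [Finset.sum_pair hcc]
    have hGG : w ∘ (c.castSucc).succAbove = w ∘ (c.succ).succAbove := by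
      funext a
      rcases eq_or_ne a c with rfl | hac
      · simp only [Function.comp_apply]
        rw [Fin.succAbove_castSucc_self, Fin.succAbove_succ_self]
        exact hwc.symm
      · simp only [Function.comp_apply]
        congr 1
        rcases lt_or_gt_of_ne hac with hlt | hgt
        · rw [Fin.succAbove_castSucc_of_lt c a hlt, Fin.succAbove_succ_of_le c a hlt.le]
        · rw [Fin.succAbove_castSucc_of_le c a hgt.le, Fin.succAbove_succ_of_lt c a hgt]
    have hsub : (⟨ιMulti R n (w ∘ (c.castSucc).succAbove),
          ιMulti_range R n (Set.mem_range_self _)⟩ : (⋀[R]^n V)) =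
        ⟨ιMulti R n (w ∘ (c.succ).succAbove), ιMulti_range R n (Set.mem_range_self _)⟩ :=
      Subtype.ext (by rw [hGG])
    rw [hsub, hwc, Fin.coe_castSucc, Fin.val_succ, pow_succ, mul_neg_one, ← add_smul,
      add_neg_cancel, zero_smul]
  · intro i _ hi
    simp only [Finset.mem_insert, Finset.mem_singleton, not_or] at hi
    obtain ⟨hic, his⟩ := hi
    obtain ⟨a, ha⟩ := Fin.exists_succAbove_eq (Ne.symm hic)
    obtain ⟨b, hb⟩ := Fin.exists_succAbove_eq (Ne.symm his)
    have hab : a ≠ b := by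
      intro h; apply hcc; rw [← ha, ← hb, h]
    have hzero : ιMulti R n (w ∘ i.succAbove) = 0 :=
      AlternatingMap.map_eq_zero_of_eq _ _
        (by simp only [Function.comp_apply]; rw [ha, hb]; exact hwc) hab
    rw [show (⟨ιMulti R n (w ∘ i.succAbove), ιMulti_range R n (Set.mem_range_self _)⟩ :
        (⋀[R]^n V)) = 0 from Subtype.ext hzero, tmul_zero, smul_zero]

/-- The alternating multilinear map
`(v₁, …, v_{n+1}) ↦ Σᵢ (−1)^{i−1} vᵢ ⊗ (v₁ ∧ ⋯ ∧ v̂ᵢ ∧ ⋯ ∧ v_{n+1})`. -/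
noncomputable def deltaAlternating (n : ℕ) :
    V [⋀^Fin (n + 1)]→ₗ[R] (V ⊗[R] (⋀[R]^n V)) :=
  { (∑ i : Fin (n + 1), ((-1 : R) ^ (i : ℕ)) • deltaTerm R V n i :
      MultilinearMap R (fun _ : Fin (n + 1) => V) (V ⊗[R] (⋀[R]^n V))) with
    map_eq_zero_of_eq' := by
      intro v x y hvxy hxy
      exact MultilinearMap.eq_zero_of_eq_of_adjacent R V
        (N := V ⊗[R] (⋀[R]^n V))
        (∑ i : Fin (n + 1), ((-1 : R) ^ (i : ℕ)) • deltaTerm R V n i)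
        (deltaSum_adjacent_eq_zero R V n) v x y hvxy hxy }

/-- The comultiplication map `δ : Λ^{n+1} V → V ⊗ Λⁿ V`, the linear map induced on the
`(n+1)`-st exterior power by the alternating multilinear map
`(v₁, …, v_{n+1}) ↦ Σᵢ (−1)^{i−1} vᵢ ⊗ (v₁ ∧ ⋯ ∧ v̂ᵢ ∧ ⋯ ∧ v_{n+1})`. -/
noncomputable def deltaMap (n : ℕ) : (⋀[R]^(n+1) V) →ₗ[R] V ⊗[R] (⋀[R]^n V) :=
  LinearMap.domRestrict
    (ExteriorAlgebra.liftAlternating (R := R) (M := V) (N := V ⊗[R] (⋀[R]^n V))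
      (Function.update (fun _ => 0) (n + 1) (deltaAlternating R V n)))
    (⋀[R]^(n+1) V)

/-! Two identities for `δ`, valid over any commutative ring. First, `m ∘ δ = k • id` on `Λᵏ V`,
since each of the `k` terms `(-1)^(i-1) vᵢ ∧ (v₁ ∧ ⋯ v̂ᵢ ⋯ ∧ v_k)` equals `v₁ ∧ ⋯ ∧ v_k`; so
`m ∘ δ = 0` when `p ∣ k`. Second, Laplace expansion of `det (fⱼ (vᵢ))` along its first column
shows that pairing `Λᵏ V` with `f₁ ∧ ⋯ ∧ f_k ∈ Λᵏ V*` factors through `δ`, via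
`x ⊗ ω ↦ f₁ x · ⟨f₂ ∧ ⋯ ∧ f_k, ω⟩`. For free `V` these pairings include the coordinate
functionals of the standard basis of `Λᵏ V`, so `δ` is injective. -/

variable {R V}

open exteriorPower (pairingDual pairingDual_ιMulti_ιMulti)

theorem deltaMap_ιMulti (n : ℕ) (v : Fin (n + 1) → V) :
    deltaMap R V n (exteriorPower.ιMulti R (n + 1) v) =
      ∑ i : Fin (n + 1), (-1 : R) ^ (i : ℕ) • (v i ⊗ₜ exteriorPower.ιMulti R n (i.removeNth v)) := by
  simp only [deltaMap, LinearMap.domRestrict_apply, exteriorPower.ιMulti_apply_coe,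
    liftAlternating_apply_ιMulti, Function.update_self, deltaAlternating, AlternatingMap.coe_mk,
    sum_apply, smul_apply, deltaTerm_apply]
  rfl

theorem wedgeMap_tmul_ιMulti {n : ℕ} (x : V) (w : Fin n → V) :
    wedgeMap R V n (x ⊗ₜ exteriorPower.ιMulti R n w) =
      exteriorPower.ιMulti R (n + 1) (Matrix.vecCons x w) := by
  ext
  simp [wedgeMap, wedgeCurry]

theorem wedgeMap_comp_deltaMap (n : ℕ) :
    wedgeMap R V n ∘ₗ deltaMap R V n = (n + 1) • LinearMap.id := by
  refine exteriorPower.linearMap_ext (AlternatingMap.ext fun v => ?_)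
  have hterm (i : Fin (n + 1)) : (-1 : R) ^ (i : ℕ) •
      exteriorPower.ιMulti R (n + 1) (Matrix.vecCons (v i) (i.removeNth v)) =
        exteriorPower.ιMulti R (n + 1) v := by
    conv_rhs => rw [← Fin.insertNth_self_removeNth i v, AlternatingMap.map_insertNth]
    rw [← Int.cast_smul_eq_zsmul R, Int.cast_pow, Int.cast_neg, Int.cast_one]
  simp [deltaMap_ιMulti, wedgeMap_tmul_ιMulti, hterm, succ_nsmul]

noncomputable def headTailPairing {n : ℕ} (f : Fin (n + 1) → Module.Dual R V) :
    V ⊗[R] ⋀[R]^n V →ₗ[R] R :=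
  TensorProduct.lift ((f 0).smulRight (pairingDual R V n (exteriorPower.ιMulti R n (Fin.tail f))))

theorem headTailPairing_comp_deltaMap {n : ℕ} (f : Fin (n + 1) → Module.Dual R V) :
    headTailPairing f ∘ₗ deltaMap R V n =
      pairingDual R V (n + 1) (exteriorPower.ιMulti R (n + 1) f) := by
  refine exteriorPower.linearMap_ext (AlternatingMap.ext fun v => ?_)
  simp only [headTailPairing, LinearMap.comp_apply, deltaMap_ιMulti, map_sum, map_smul,
    lift.tmul, LinearMap.smulRight_apply, LinearMap.smul_apply, pairingDual_ιMulti_ιMulti,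
    Matrix.det_succ_column_zero, smul_eq_mul, LinearMap.compAlternatingMap_apply]
  refine Finset.sum_congr rfl fun i _ => ?_
  rw [mul_assoc]
  rfl

theorem deltaMap_injective [Module.Free R V] (n : ℕ) : Function.Injective (deltaMap R V n) := by
  classical
  let b := Module.Free.chooseBasis R V
  let : LinearOrder (Module.Free.ChooseBasisIndex R V) := linearOrderOfSTO WellOrderingRel
  rw [← LinearMap.ker_eq_bot, Submodule.eq_bot_iff]
  intro ω hω
  refine (b.exteriorPower (n + 1)).forall_coord_eq_zero_iff.mp fun s => ?_
  rw [exteriorPower.basis_coord, exteriorPower.ιMultiDual, exteriorPower.ιMulti_family,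
    ← headTailPairing_comp_deltaMap, LinearMap.comp_apply, LinearMap.mem_ker.mp hω, map_zero]

theorem deltaMap_injective_and_range_le_ker_general (K : Type*) [Field K] (p : ℕ) [CharP K p]
    (V : Type*) [AddCommGroup V] [Module K V]
    (k : ℕ) (hk : 1 ≤ k) (hpk : p ∣ k) :
    Function.Injective (deltaMap K V (k - 1)) ∧
    LinearMap.range (deltaMap K V (k - 1)) ≤ LinearMap.ker (wedgeMap K V (k - 1)) ∧
    ∃ W : Submodule K (LinearMap.ker (wedgeMap K V (k - 1))),
      Nonempty ((⋀[K]^(k - 1 + 1) V) ≃ₗ[K] W) := by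
  obtain ⟨n, rfl⟩ := Nat.exists_eq_add_of_le' hk
  have hchar : ((n + 1 : ℕ) : K) = 0 := (CharP.cast_eq_zero_iff K p _).mpr hpk
  have hinj := deltaMap_injective (R := K) (V := V) n
  have hle : LinearMap.range (deltaMap K V n) ≤ LinearMap.ker (wedgeMap K V n) := by
    rw [LinearMap.range_le_ker_iff, wedgeMap_comp_deltaMap, ← Nat.cast_smul_eq_nsmul K, hchar,
      zero_smul]
  have hmem x : deltaMap K V n x ∈ LinearMap.ker (wedgeMap K V n) := hle ⟨x, rfl⟩
  exact ⟨hinj, hle, _, ⟨LinearEquiv.ofInjective _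
    ((LinearMap.injective_codRestrict_iff hmem).mpr hinj)⟩⟩

/-- Let `K` be a field of characteristic `p > 0`, `V` a finite-dimensional `K`-vector space,
and `k ≥ 1` an integer with `p ∣ k` and `k ≤ dim V`.  Then the comultiplication
`δ : Λᵏ V → V ⊗ Λ^{k−1} V` is injective with image contained in the kernel of the wedge map
`m : V ⊗ Λ^{k−1} V → Λᵏ V`; in particular `Λᵏ V` is isomorphic, as a `K`-vector space, to a
subspace of `ker m`. -/
theorem deltaMap_injective_and_range_le_ker (K : Type*) [Field K] (p : ℕ) [CharP K p]
    (hp : 0 < p) (V : Type*) [AddCommGroup V] [Module K V] [FiniteDimensional K V]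
    (k : ℕ) (hk : 1 ≤ k) (hpk : p ∣ k) (hkV : k ≤ Module.finrank K V) :
    Function.Injective (deltaMap K V (k - 1)) ∧
    LinearMap.range (deltaMap K V (k - 1)) ≤ LinearMap.ker (wedgeMap K V (k - 1)) ∧
    ∃ W : Submodule K (LinearMap.ker (wedgeMap K V (k - 1))),
      Nonempty ((⋀[K]^(k - 1 + 1) V) ≃ₗ[K] W) :=
  deltaMap_injective_and_range_le_ker_general K p V k hk hpk
end
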